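/- arXiv:1807.09965 — 9 statements merged into one kernel-verified Lean document; each statement's English description precedes it below -/
import Mathlib

section
/- Every semicocycle {Γ_t}_{t≥0} ⊂ C(D, A) over a semigroup F ⊂ C(D) is jointly continuous on (0,∞) × D. Moreover, if F is jointly continuous on [0,∞) × D, then {Γ_t} is jointly continuous on [0,∞) × D. -/
/-!
The semicocycle is carried by a semiflow: `G_t (x, a) = (F_t x, Γ_t(x) a)` is a semiflow on
`D × A`, and `Γ_t x` is the second component of `G_t (x, 1)`.

Joint continuity of a semiflow `G` (Chernoff–Marsden) comes from two Baire category arguments in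
the time variable. A right-continuous orbit `t ↦ G_t x` has a point of continuity `v` in every
interval `(0, u)`, and `G_t x = G_{u-v} (G_{t-(u-v)} x)` carries it to `u`. Once orbits are
continuous, Osgood's argument gives, in every interval `(0, t)`, a time `m` at which
`(s, y) ↦ G_s y` is jointly continuous at `(m, x)`, and `G_s = G_{t-m} ∘ G_{s-(t-m)}` carries this
to `(t, x)`.

At time `0` the cocycle law is inverted: `Γ_c x` is invertible for small `c > 0`, so near `(0, x)`
one has `Γ_t y = Γ_c(F_t y)⁻¹ Γ_{c+t}(y)`, which is continuous at `(0, x)` when `F` is.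
-/

open Filter Metric Set Topology Function

theorem exists_mem_Ioo_continuousAt_of_continuousWithinAt_Ici {E : Type*} [PseudoMetricSpace E]
    {f : ℝ → E} {p q : ℝ} (hpq : p < q) (hf : ∀ u ∈ Icc p q, ContinuousWithinAt f (Ici u) u) :
    ∃ v ∈ Ioo p q, ContinuousAt f v := by
  set R : ℕ → ℕ → Set ℝ := fun n k =>
    {u | u ∈ Icc p q → ∀ s ∈ Ico u (u + 1 / (n + 1)), dist (f s) (f u) ≤ 1 / (k + 1)}
  have hcover : ∀ k, ⋃ n, closure (R n k) = univ := by
    refine fun k => eq_univ_of_forall fun u => mem_iUnion.2 ?_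
    by_cases hu : u ∈ Icc p q
    · obtain ⟨w, hw, hsub⟩ := mem_nhdsGE_iff_exists_Ico_subset.1 <|
        (hf u hu).eventually (closedBall_mem_nhds (f u) Nat.one_div_pos_of_nat)
      obtain ⟨n, hn⟩ := exists_nat_one_div_lt (sub_pos.2 (mem_Ioi.1 hw))
      exact ⟨n, subset_closure fun _ s hs => hsub ⟨hs.1, by linarith [hs.2]⟩⟩
    · exact ⟨0, subset_closure fun h => (hu h).elim⟩
  have hdense : Dense (⋂ k, ⋃ n, interior (closure (R n k))) :=
    dense_iInter_of_isOpen (fun k => isOpen_iUnion fun n => isOpen_interior)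
      fun k => dense_iUnion_interior_of_closed (fun n => isClosed_closure) (hcover k)
  obtain ⟨v, hvG, hv⟩ := hdense.exists_mem_open isOpen_Ioo (nonempty_Ioo.2 hpq)
  refine ⟨v, hv, continuousAt_iff_continuous_left_right.2 ⟨?_, hf v (Ioo_subset_Icc_self hv)⟩⟩
  refine Metric.continuousWithinAt_iff.2 fun ε hε => ?_
  obtain ⟨k, hk⟩ := exists_nat_one_div_lt (half_pos hε)
  obtain ⟨n, hn⟩ := mem_iUnion.1 (mem_iInter.1 hvG k)
  obtain ⟨η, hη, hball⟩ := Metric.isOpen_iff.1 isOpen_interior v hn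
  set δ := min η (min (1 / (n + 1)) (v - p))
  have hδη : δ ≤ η := min_le_left _ _
  have hδn : δ ≤ 1 / (n + 1) := (min_le_right _ _).trans (min_le_left _ _)
  have hδp : δ ≤ v - p := (min_le_right _ _).trans (min_le_right _ _)
  refine ⟨δ, lt_min hη (lt_min Nat.one_div_pos_of_nat (sub_pos.2 hv.1)), fun {w} hwv hwδ => ?_⟩
  rw [mem_Iic] at hwv
  rw [Real.dist_eq, abs_sub_lt_iff] at hwδ
  have hsub : Ioo (v - δ) w ⊆ closure (R n k) := fun s hs => interior_subset <| hball <| by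
    rw [Real.ball_eq_Ioo]; exact ⟨by linarith [hs.1], by linarith [hs.2]⟩
  -- a point `u ∈ R n k` just left of `w` controls both `f w` and `f v`
  obtain ⟨u, huR, hu⟩ := (closure_inter_open_nonempty_iff isOpen_Ioo).1 <|
    (nonempty_Ioo.2 (show v - δ < w by linarith)).mono fun s hs => ⟨hsub hs, hs⟩
  have hclose := huR ⟨by linarith [hu.1], by linarith [hu.2, hv.2]⟩
  have hw := hclose w ⟨hu.2.le, by linarith [hu.1]⟩
  have hv' := hclose v ⟨by linarith [hu.2], by linarith [hu.1]⟩
  calc dist (f w) (f v) ≤ dist (f w) (f u) + dist (f v) (f u) := dist_triangle_right _ _ _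
    _ < ε := by linarith

theorem BaireSpace.exists_continuousWithinAt_uncurry {T Y E : Type*} [TopologicalSpace T]
    [BaireSpace T] [PseudoMetricSpace Y] [PseudoMetricSpace E] {f : T → Y → E} {S : Set Y}
    {y₀ : Y} (hy₀ : y₀ ∈ S) (hT : ∀ y ∈ S, Continuous fun t => f t y)
    (hY : ∀ t, ContinuousWithinAt (f t) S y₀) {U : Set T} (hU : IsOpen U) (hne : U.Nonempty) :
    ∃ m ∈ U, ContinuousWithinAt (uncurry f) (univ ×ˢ S) (m, y₀) := by
  set C : ℕ → ℕ → Set T := fun n k =>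
    ⋂ y ∈ S ∩ ball y₀ (1 / (n + 1)), {t | dist (f t y) (f t y₀) ≤ 1 / (k + 1)}
  have hC : ∀ n k, IsClosed (C n k) := fun n k =>
    isClosed_biInter fun y hy => isClosed_le ((hT y hy.1).dist (hT y₀ hy₀)) continuous_const
  have hcover : ∀ k, ⋃ n, C n k = univ := by
    refine fun k => eq_univ_of_forall fun t => mem_iUnion.2 ?_
    obtain ⟨δ, hδ, hball⟩ := Metric.continuousWithinAt_iff.1 (hY t) _ Nat.one_div_pos_of_nat
    obtain ⟨n, hn⟩ := exists_nat_one_div_lt hδ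
    exact ⟨n, mem_iInter₂.2 fun y hy => (hball hy.1 (hy.2.trans hn)).le⟩
  have hdense : Dense (⋂ k, ⋃ n, interior (C n k)) :=
    dense_iInter_of_isOpen (fun k => isOpen_iUnion fun n => isOpen_interior)
      fun k => dense_iUnion_interior_of_closed (fun n => hC n k) (hcover k)
  obtain ⟨m, hmG, hmU⟩ := hdense.exists_mem_open hU hne
  refine ⟨m, hmU, Metric.tendsto_nhds.2 fun ε hε => ?_⟩
  obtain ⟨k, hk⟩ := exists_nat_one_div_lt (half_pos hε)
  obtain ⟨n, hn⟩ := mem_iUnion.1 (mem_iInter.1 hmG k)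
  have hfst : ∀ᶠ t in 𝓝 m, t ∈ interior (C n k) ∧ dist (f t y₀) (f m y₀) < ε / 2 :=
    Eventually.and (isOpen_interior.mem_nhds hn) <|
      ((hT y₀ hy₀).tendsto m).eventually (ball_mem_nhds _ (half_pos hε))
  have hsnd : ∀ᶠ y in 𝓝[S] y₀, y ∈ S ∩ ball y₀ (1 / (n + 1)) :=
    inter_mem self_mem_nhdsWithin <|
      mem_nhdsWithin_of_mem_nhds (ball_mem_nhds _ Nat.one_div_pos_of_nat)
  rw [nhdsWithin_prod_eq, nhdsWithin_univ]
  filter_upwards [prod_mem_prod hfst hsnd] with p ⟨⟨hpC, hpm⟩, hpS⟩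
  have hpy : dist (f p.1 p.2) (f p.1 y₀) ≤ 1 / (k + 1) :=
    mem_iInter₂.1 (interior_subset hpC) p.2 hpS
  calc dist (f p.1 p.2) (f m y₀) ≤ dist (f p.1 p.2) (f p.1 y₀) + dist (f p.1 y₀) (f m y₀) :=
        dist_triangle _ _ _
    _ < ε := by linarith

theorem exists_mem_Ioo_continuousWithinAt_uncurry {Y E : Type*} [PseudoMetricSpace Y]
    [PseudoMetricSpace E] {f : ℝ → Y → E} {S : Set Y} {y₀ : Y} (hy₀ : y₀ ∈ S) {a b : ℝ}
    (hab : a < b) (hT : ∀ y ∈ S, ContinuousOn (fun t => f t y) (Icc a b))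
    (hY : ∀ t ∈ Icc a b, ContinuousWithinAt (f t) S y₀) :
    ∃ m ∈ Ioo a b, ContinuousWithinAt (uncurry f) (univ ×ˢ S) (m, y₀) := by
  set π : ℝ × Y → Icc a b × Y := Prod.map (projIcc a b hab.le) id
  have hmid : (a + b) / 2 ∈ Ioo a b := ⟨by linarith, by linarith⟩
  obtain ⟨m, hm, hcont⟩ := BaireSpace.exists_continuousWithinAt_uncurry
    (f := fun (t : Icc a b) y => f t y) hy₀ (fun y hy => (hT y hy).domRestrict)
    (fun t => hY t t.2) (isOpen_Ioo.preimage continuous_subtype_val)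
    ⟨⟨_, Ioo_subset_Icc_self hmid⟩, hmid⟩
  refine ⟨m, hm, ?_⟩
  have hπ : ContinuousWithinAt (uncurry _ ∘ π) (univ ×ˢ S) ((m : ℝ), y₀) :=
    hcont.comp_of_eq (continuous_projIcc.prodMap continuous_id).continuousWithinAt
      (fun p hp => hp) (by simp [π])
  refine hπ.congr_of_eventuallyEq ?_ (by simp [π])
  have hIcc : ∀ᶠ p : ℝ × Y in 𝓝[univ ×ˢ S] ((m : ℝ), y₀), p.1 ∈ Icc a b :=
    ((continuous_fst.tendsto _).mono_left nhdsWithin_le_nhds).eventually (Icc_mem_nhds hm.1 hm.2)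
  filter_upwards [hIcc] with ⟨t, y⟩ ht
  simp only [π, comp_apply, Prod.map_apply, id, uncurry_apply_pair, projIcc_of_mem _ ht]

theorem Filter.Tendsto.of_mul_left_of_isUnit {α R : Type*} [NormedRing R]
    [HasSummableGeomSeries R] {l : Filter α} {a b : α → R} {x y : R} (hx : IsUnit x)
    (ha : Tendsto a l (𝓝 x)) (hab : Tendsto (fun i => a i * b i) l (𝓝 (x * y))) :
    Tendsto b l (𝓝 y) := by
  have hlim := ((NormedRing.inverse_continuousAt hx.unit).tendsto.comp ha).mul hab
  rw [IsUnit.unit_spec, ← mul_assoc, Ring.inverse_mul_cancel x hx, one_mul] at hlim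
  refine hlim.congr' ?_
  filter_upwards [ha.eventually (Units.isOpen.mem_nhds hx)] with i hi
  simp [← mul_assoc, Ring.inverse_mul_cancel _ hi]

structure IsSemiflowOn {E : Type*} [TopologicalSpace E] (G : ℝ → E → E) (Ω : Set E) : Prop where
  mapsTo : ∀ t ≥ (0 : ℝ), MapsTo (G t) Ω Ω
  continuousOn : ∀ t ≥ (0 : ℝ), ContinuousOn (G t) Ω
  add_apply : ∀ t ≥ (0 : ℝ), ∀ s ≥ (0 : ℝ), ∀ x ∈ Ω, G (t + s) x = G t (G s x)
  tendsto_zero : ∀ x ∈ Ω, Tendsto (fun t => G t x) (𝓝[>] 0) (𝓝 x)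

namespace IsSemiflowOn

section Topological

variable {E : Type*} [TopologicalSpace E] {G : ℝ → E → E} {Ω : Set E} {x : E}

theorem apply_zero [T2Space E] (hG : IsSemiflowOn G Ω) (hx : x ∈ Ω) : G 0 x = x := by
  have h : Tendsto (fun t => G t x) (𝓝[>] 0) (𝓝 (G 0 x)) :=
    (hG.tendsto_zero _ (hG.mapsTo 0 le_rfl hx)).congr' <|
      eventually_nhdsWithin_of_forall fun t ht => by
        rw [← hG.add_apply t (le_of_lt ht) 0 le_rfl x hx, add_zero]
  exact tendsto_nhds_unique h (hG.tendsto_zero x hx)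

theorem continuousWithinAt_orbit_Ici [T2Space E] (hG : IsSemiflowOn G Ω) (hx : x ∈ Ω) {u : ℝ}
    (hu : 0 ≤ u) : ContinuousWithinAt (fun t => G t x) (Ici u) u := by
  have hy : G u x ∈ Ω := hG.mapsTo u hu hx
  have h0 : ContinuousWithinAt (fun s => G s (G u x)) (Ici 0) 0 := by
    rw [← Ioi_insert, continuousWithinAt_insert_self, ContinuousWithinAt, hG.apply_zero hy]
    exact hG.tendsto_zero _ hy
  refine (h0.comp_of_eq (continuous_sub_right u).continuousWithinAt
    (fun t ht => mem_Ici.2 (sub_nonneg.2 ht)) (sub_self u)).congr (fun t ht => ?_) ?_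
  · rw [comp_apply, ← hG.add_apply _ (sub_nonneg.2 ht) u hu x hx, sub_add_cancel]
  · rw [comp_apply, sub_self, hG.apply_zero hy]

theorem continuousWithinAt_uncurry_add (hG : IsSemiflowOn G Ω) {S : Set E} (hS : S ⊆ Ω)
    {m c : ℝ} (hm : 0 < m) (hc : 0 ≤ c) (hx : x ∈ Ω)
    (h : ContinuousWithinAt (uncurry G) (univ ×ˢ S) (m, x)) :
    ContinuousWithinAt (uncurry G) (univ ×ˢ S) (c + m, x) := by
  set l := 𝓝[univ ×ˢ S] (c + m, x)
  have hshift : Tendsto (fun p : ℝ × E => (p.1 - c, p.2)) l (𝓝[univ ×ˢ S] (m, x)) := by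
    have hcont : Continuous fun p : ℝ × E => (p.1 - c, p.2) := by fun_prop
    simpa only [add_sub_cancel_left] using
      hcont.continuousWithinAt.tendsto_nhdsWithin (x := (c + m, x)) (t := univ ×ˢ S)
        fun p (hp : p ∈ univ ×ˢ S) => ⟨trivial, hp.2⟩
  have hpos : ∀ᶠ p in l, 0 < p.1 - c ∧ p.2 ∈ Ω := by
    have hfst : ∀ᶠ p in l, c < p.1 := Tendsto.eventually_const_lt (lt_add_of_pos_right c hm)
      ((continuous_fst.tendsto (c + m, x)).mono_left nhdsWithin_le_nhds)
    filter_upwards [hfst, self_mem_nhdsWithin] with p hp hpS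
    exact ⟨sub_pos.2 hp, hS hpS.2⟩
  have hinner : Tendsto (fun p : ℝ × E => G (p.1 - c) p.2) l (𝓝[Ω] (G m x)) :=
    tendsto_nhdsWithin_iff.2
      ⟨h.tendsto.comp hshift, hpos.mono fun p hp => hG.mapsTo _ hp.1.le hp.2⟩
  have hlim := ((hG.continuousOn c hc) _ (hG.mapsTo m hm.le hx)).tendsto.comp hinner
  rw [← hG.add_apply c hc m hm.le x hx] at hlim
  refine hlim.congr' (hpos.mono fun p hp => ?_)
  simp only [comp_apply, uncurry]
  rw [← hG.add_apply c hc _ hp.1.le _ hp.2, add_sub_cancel]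

end Topological

section Metric

variable {E : Type*} [MetricSpace E] {G : ℝ → E → E} {Ω : Set E} {x : E}

theorem continuousAt_orbit (hG : IsSemiflowOn G Ω) (hx : x ∈ Ω) {u : ℝ} (hu : 0 < u) :
    ContinuousAt (fun t => G t x) u := by
  obtain ⟨v, hv, hcont⟩ := exists_mem_Ioo_continuousAt_of_continuousWithinAt_Ici hu
    fun w hw => hG.continuousWithinAt_orbit_Ici hx hw.1
  have hv' : ContinuousWithinAt (uncurry G) (univ ×ˢ {x}) (v, x) :=
    (hcont.comp continuousAt_fst).continuousWithinAt.congr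
      (fun p hp => by rw [comp_apply, ← mem_singleton_iff.1 hp.2]; rfl) rfl
  have hu' := hG.continuousWithinAt_uncurry_add (singleton_subset_iff.2 hx) hv.1
    (sub_nonneg.2 hv.2.le) hx hv'
  rw [sub_add_cancel] at hu'
  exact (continuousWithinAt_univ _ _).1 <|
    hu'.comp (f := fun t => (t, x)) (by fun_prop : Continuous _).continuousWithinAt
      fun _ _ => ⟨trivial, rfl⟩

theorem continuousOn_orbit (hG : IsSemiflowOn G Ω) (hx : x ∈ Ω) :
    ContinuousOn (fun t => G t x) (Ici 0) := fun _ hu =>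
  (mem_Ici.1 hu).eq_or_lt.elim (fun h => h ▸ hG.continuousWithinAt_orbit_Ici hx le_rfl)
    fun h => (hG.continuousAt_orbit hx h).continuousWithinAt

theorem continuousOn_uncurry (hG : IsSemiflowOn G Ω) :
    ContinuousOn (uncurry G) (Ioi 0 ×ˢ Ω) := by
  rintro ⟨t, x⟩ ⟨ht, hx⟩
  obtain ⟨m, hm, hcont⟩ := exists_mem_Ioo_continuousWithinAt_uncurry hx ht
    (fun y hy => (hG.continuousOn_orbit hy).mono Icc_subset_Ici_self)
    (fun s hs => hG.continuousOn s hs.1 x hx)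
  have h := hG.continuousWithinAt_uncurry_add subset_rfl hm.1 (sub_nonneg.2 hm.2.le) hx hcont
  rw [sub_add_cancel] at h
  exact h.mono (prod_mono (subset_univ _) subset_rfl)

end Metric

end IsSemiflowOn

structure IsSemicocycle {X A : Type*} [TopologicalSpace X] [TopologicalSpace A] [Mul A] [One A]
    (Γ : ℝ → X → A) (F : ℝ → X → X) (D : Set X) : Prop where
  continuousOn : ∀ t ≥ (0 : ℝ), ContinuousOn (Γ t) D
  add_apply : ∀ t ≥ (0 : ℝ), ∀ s ≥ (0 : ℝ), ∀ x ∈ D, Γ (t + s) x = Γ t (F s x) * Γ s x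
  tendsto_zero : ∀ x ∈ D, Tendsto (fun t => Γ t x) (𝓝[>] 0) (𝓝 1)

namespace IsSemicocycle

variable {X A : Type*} {Γ : ℝ → X → A} {F : ℝ → X → X} {D : Set X}

theorem isSemiflowOn_skewProduct [TopologicalSpace X] [TopologicalSpace A] [Monoid A]
    [ContinuousMul A] (hΓ : IsSemicocycle Γ F D) (hF : IsSemiflowOn F D) :
    IsSemiflowOn (fun t (p : X × A) => (F t p.1, Γ t p.1 * p.2)) (D ×ˢ univ) where
  mapsTo t ht _ hp := ⟨hF.mapsTo t ht hp.1, trivial⟩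
  continuousOn t ht :=
    ((hF.continuousOn t ht).comp continuousOn_fst fun _ hp => hp.1).prodMk <|
      ((hΓ.continuousOn t ht).comp continuousOn_fst fun _ hp => hp.1).mul continuousOn_snd
  add_apply t ht s hs p hp := by
    rw [hF.add_apply t ht s hs _ hp.1, hΓ.add_apply t ht s hs _ hp.1, mul_assoc]
  tendsto_zero p hp := by
    simpa using (hF.tendsto_zero _ hp.1).prodMk_nhds ((hΓ.tendsto_zero _ hp.1).mul_const p.2)

section Metric

variable [MetricSpace X] [MetricSpace A] [Monoid A] [ContinuousMul A]

theorem apply_zero (hΓ : IsSemicocycle Γ F D) (hF : IsSemiflowOn F D) {x : X} (hx : x ∈ D) :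
    Γ 0 x = 1 := by
  simpa using congrArg Prod.snd <|
    (hΓ.isSemiflowOn_skewProduct hF).apply_zero (x := (x, 1)) ⟨hx, trivial⟩

theorem continuousOn_uncurry (hΓ : IsSemicocycle Γ F D) (hF : IsSemiflowOn F D) :
    ContinuousOn (uncurry Γ) (Ioi 0 ×ˢ D) := by
  have h := (hΓ.isSemiflowOn_skewProduct hF).continuousOn_uncurry.comp
    (f := fun p : ℝ × X => (p.1, (p.2, (1 : A)))) (by fun_prop : Continuous _).continuousOn
    fun p (hp : p ∈ Ioi 0 ×ˢ D) => ⟨hp.1, hp.2, trivial⟩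
  exact (continuous_snd.comp_continuousOn h).congr fun p _ => by simp [uncurry]

end Metric

section NormedRing

variable [MetricSpace X] [NormedRing A] [HasSummableGeomSeries A]

theorem continuousWithinAt_uncurry_zero (hΓ : IsSemicocycle Γ F D) (hF : IsSemiflowOn F D)
    {x : X} (hx : x ∈ D) (hFx : ContinuousWithinAt (uncurry F) (Ici 0 ×ˢ D) (0, x)) :
    ContinuousWithinAt (uncurry Γ) (Ici 0 ×ˢ D) (0, x) := by
  obtain ⟨c, hcu, hc⟩ := (((hΓ.tendsto_zero x hx).eventually
    (Units.isOpen.mem_nhds isUnit_one)).and self_mem_nhdsWithin).exists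
  set l := 𝓝[Ici 0 ×ˢ D] ((0 : ℝ), x)
  have hFl : Tendsto (uncurry F) l (𝓝[D] x) := by
    have := hFx.tendsto_nhdsWithin (t := D)
      fun p (hp : p ∈ Ici 0 ×ˢ D) => hF.mapsTo p.1 hp.1 hp.2
    rwa [uncurry_apply_pair, hF.apply_zero hx] at this
  have ha : Tendsto (fun p : ℝ × X => Γ c (F p.1 p.2)) l (𝓝 (Γ c x)) :=
    ((hΓ.continuousOn c hc.le) x hx).tendsto.comp hFl
  have hb : Tendsto (fun p : ℝ × X => Γ (c + p.1) p.2) l (𝓝 (Γ c x * Γ 0 x)) := by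
    rw [hΓ.apply_zero hF hx, mul_one]
    have hshift := (hΓ.continuousOn_uncurry hF (c, x) ⟨hc, hx⟩).comp_of_eq
      (f := fun p : ℝ × X => (c + p.1, p.2)) (x := (0, x))
      (by fun_prop : Continuous _).continuousWithinAt
      (fun p (hp : p ∈ Ici 0 ×ˢ D) => ⟨lt_add_of_pos_of_le hc hp.1, hp.2⟩) (by simp)
    simpa [comp_def, uncurry] using hshift.tendsto
  refine ha.of_mul_left_of_isUnit hcu (hb.congr' ?_)
  filter_upwards [self_mem_nhdsWithin] with p hp
  exact hΓ.add_apply c hc.le p.1 hp.1 p.2 hp.2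

theorem continuousOn_uncurry_Ici (hΓ : IsSemicocycle Γ F D) (hF : IsSemiflowOn F D)
    (hFc : ContinuousOn (uncurry F) (Ici 0 ×ˢ D)) : ContinuousOn (uncurry Γ) (Ici 0 ×ˢ D) := by
  rintro ⟨t, x⟩ ⟨ht, hx⟩
  rcases (mem_Ici.1 ht).eq_or_lt with rfl | ht
  · exact hΓ.continuousWithinAt_uncurry_zero hF hx (hFc _ ⟨ht, hx⟩)
  · refine (hΓ.continuousOn_uncurry hF _ ⟨ht, hx⟩).mono_of_mem_nhdsWithin <| mem_nhdsWithin.2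
      ⟨Ioi 0 ×ˢ univ, isOpen_Ioi.prod isOpen_univ, ⟨ht, trivial⟩, fun p hp => ⟨hp.1.1, hp.2.2⟩⟩

end NormedRing

end IsSemicocycle

theorem semicocycle_jointly_continuous_general
    {X A : Type*} [NormedAddCommGroup X] [NormedRing A] [CompleteSpace A]
    (D : Set X)
    (F : ℝ → X → X)
    (hFmaps : ∀ t ≥ (0:ℝ), Set.MapsTo (F t) D D)
    (hFc : ∀ t ≥ (0:ℝ), ContinuousOn (F t) D)
    (hFsg : ∀ t ≥ (0:ℝ), ∀ s ≥ (0:ℝ), ∀ x ∈ D, F (t + s) x = F t (F s x))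
    (hF0 : ∀ x ∈ D, Tendsto (fun t => F t x) (𝓝[>] (0:ℝ)) (𝓝 x))
    (Γ : ℝ → X → A)
    (hΓc : ∀ t ≥ (0:ℝ), ContinuousOn (Γ t) D)
    (hchain : ∀ t ≥ (0:ℝ), ∀ s ≥ (0:ℝ), ∀ x ∈ D, Γ (t + s) x = Γ t (F s x) * Γ s x)
    (hΓ0 : ∀ x ∈ D, Tendsto (fun t => Γ t x) (𝓝[>] (0:ℝ)) (𝓝 1)) :
    ContinuousOn (fun p : ℝ × X => Γ p.1 p.2) (Set.Ioi (0:ℝ) ×ˢ D) ∧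
    (ContinuousOn (fun p : ℝ × X => F p.1 p.2) (Set.Ici (0:ℝ) ×ˢ D) →
      ContinuousOn (fun p : ℝ × X => Γ p.1 p.2) (Set.Ici (0:ℝ) ×ˢ D)) := by
  have hF : IsSemiflowOn F D := ⟨hFmaps, hFc, hFsg, hF0⟩
  have hΓ : IsSemicocycle Γ F D := ⟨hΓc, hchain, hΓ0⟩
  exact ⟨hΓ.continuousOn_uncurry hF, hΓ.continuousOn_uncurry_Ici hF⟩

/-- Every semicocycle over a semigroup on a domain `D` is jointly continuous on
`(0,∞) × D`; if moreover the semigroup is jointly continuous on `[0,∞) × D`,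
then the semicocycle is jointly continuous on `[0,∞) × D`. -/
theorem semicocycle_jointly_continuous
    {X A : Type*} [NormedAddCommGroup X] [NormedSpace ℂ X] [CompleteSpace X]
    [NormedRing A] [NormedAlgebra ℂ A] [CompleteSpace A] [NormOneClass A]
    (D : Set X) (hDo : IsOpen D) (hDc : IsConnected D)
    (F : ℝ → X → X)
    (hFmaps : ∀ t ≥ (0:ℝ), Set.MapsTo (F t) D D)
    (hFc : ∀ t ≥ (0:ℝ), ContinuousOn (F t) D)
    (hFsg : ∀ t ≥ (0:ℝ), ∀ s ≥ (0:ℝ), ∀ x ∈ D, F (t + s) x = F t (F s x))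
    (hF0 : ∀ x ∈ D, Tendsto (fun t => F t x) (𝓝[>] (0:ℝ)) (𝓝 x))
    (Γ : ℝ → X → A)
    (hΓc : ∀ t ≥ (0:ℝ), ContinuousOn (Γ t) D)
    (hchain : ∀ t ≥ (0:ℝ), ∀ s ≥ (0:ℝ), ∀ x ∈ D, Γ (t + s) x = Γ t (F s x) * Γ s x)
    (hΓ0 : ∀ x ∈ D, Tendsto (fun t => Γ t x) (𝓝[>] (0:ℝ)) (𝓝 1)) :
    ContinuousOn (fun p : ℝ × X => Γ p.1 p.2) (Set.Ioi (0:ℝ) ×ˢ D) ∧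
    (ContinuousOn (fun p : ℝ × X => F p.1 p.2) (Set.Ici (0:ℝ) ×ˢ D) →
      ContinuousOn (fun p : ℝ × X => Γ p.1 p.2) (Set.Ici (0:ℝ) ×ˢ D)) :=
  semicocycle_jointly_continuous_general D F hFmaps hFc hFsg hF0 Γ hΓc hchain hΓ0
end

section
/- Every value Γ_t(x), t ≥ 0, x ∈ D, of a semicocycle {Γ_t}_{t≥0} ⊂ C(D,A) over a jointly continuous semigroup F ⊂ C(D) is an invertible element of the Banach algebra A. -/
open Filter Metric Set Topology

/-!
Fix `x ∈ D`. Invertibility of `Γ_s(x)` propagates forward in time, since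
`Γ_{T+v}(x) = Γ_v(F_T x) Γ_T(x)` and `Γ_v(F_T x)` is close to `1` for small `v > 0`. It also
passes to a limit from the left: for `s < T` close to `T`, splitting `Γ_{v₀+s}(x)` at time `s`
gives two units (continuity of `s ↦ Γ_{v₀}(F_s x)`), while splitting it at time `T` gives
`Γ_v(F_T x) Γ_T(x)` with `v = v₀ + s - T` small, so the unit `Γ_v(F_T x)` can be cancelled.
A continuous induction on `[0, ∞)` concludes.
-/

theorem Real.forall_nonneg_of_continuous_induction {P : ℝ → Prop}
    (hleft : ∀ T ≥ 0, (∀ s ∈ Ico 0 T, P s) → P T)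
    (hright : ∀ T ≥ 0, P T → ∀ᶠ s in 𝓝[>] T, P s) :
    ∀ t ≥ 0, P t := by
  by_contra! ⟨t, ht, hPt⟩
  set B := {s : ℝ | 0 ≤ s ∧ ¬ P s}
  have hBne : B.Nonempty := ⟨t, ht, hPt⟩
  have hBbdd : BddBelow B := ⟨0, fun _ hb => hb.1⟩
  have hT : 0 ≤ sInf B := le_csInf hBne fun _ hb => hb.1
  have hPT : P (sInf B) := hleft _ hT fun s hs =>
    by_contra fun h => (csInf_le hBbdd ⟨hs.1, h⟩).not_gt hs.2
  obtain ⟨u, hTu, hIoo⟩ := mem_nhdsGT_iff_exists_Ioo_subset.mp (hright _ hT hPT)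
  have hu : u ≤ sInf B := le_csInf hBne fun b hb => by
    by_contra! hbu
    rcases (csInf_le hBbdd hb).eq_or_lt with hTb | hTb
    · exact hb.2 (hTb ▸ hPT)
    · exact hb.2 (hIoo ⟨hTb, hbu⟩)
  exact hu.not_gt hTu

section Semicocycle

variable {X A : Type*} [NormedRing A]

theorem Filter.Tendsto.eventually_isUnit [CompleteSpace A] {α : Type*} {l : Filter α} {f : α → A}
    (h : Tendsto f l (𝓝 1)) : ∀ᶠ a in l, IsUnit (f a) :=
  h.eventually (Units.isOpen.mem_nhds isUnit_one)

variable {F : ℝ → X → X} {Γ : ℝ → X → A} {x : X} {T : ℝ}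

theorem Semicocycle.eventually_isUnit_nhdsGT [CompleteSpace A]
    (hchain : ∀ t ≥ (0:ℝ), ∀ s ≥ (0:ℝ), Γ (t + s) x = Γ t (F s x) * Γ s x)
    (hT : 0 ≤ T) (hlim : Tendsto (fun v => Γ v (F T x)) (𝓝[>] 0) (𝓝 1))
    (hunit : IsUnit (Γ T x)) :
    ∀ᶠ s in 𝓝[>] T, IsUnit (Γ s x) := by
  obtain ⟨δ, hδ, hsmall⟩ := mem_nhdsGT_iff_exists_Ioo_subset.mp hlim.eventually_isUnit
  filter_upwards [Ioo_mem_nhdsGT (lt_add_of_pos_right T hδ)] with s hs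
  rw [← sub_add_cancel s T, hchain _ (by linarith [hs.1]) T hT]
  exact (hsmall ⟨by linarith [hs.1], by linarith [hs.2]⟩).mul hunit

theorem Semicocycle.apply_zero
    (hchain : ∀ t ≥ (0:ℝ), ∀ s ≥ (0:ℝ), Γ (t + s) x = Γ t (F s x) * Γ s x)
    (hlim : Tendsto (fun v => Γ v x) (𝓝[>] 0) (𝓝 1))
    (hlim₀ : Tendsto (fun v => Γ v (F 0 x)) (𝓝[>] 0) (𝓝 1)) :
    Γ 0 x = 1 := by
  have hsplit : Tendsto (fun v => Γ v x) (𝓝[>] 0) (𝓝 (1 * Γ 0 x)) := by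
    refine (hlim₀.mul_const (Γ 0 x)).congr' ?_
    filter_upwards [self_mem_nhdsWithin] with v (hv : 0 < v)
    simpa using (hchain v hv.le 0 le_rfl).symm
  simpa using (tendsto_nhds_unique hlim hsplit).symm

theorem Semicocycle.isUnit_of_forall_Ico [TopologicalSpace X] [CompleteSpace A]
    (hchain : ∀ t ≥ (0:ℝ), ∀ s ≥ (0:ℝ), Γ (t + s) x = Γ t (F s x) * Γ s x)
    (hT : 0 < T) (hlim : Tendsto (fun v => Γ v (F T x)) (𝓝[>] 0) (𝓝 1))
    (hcont : ∀ v > (0:ℝ), ContinuousAt (fun s => Γ v (F s x)) T)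
    (hbelow : ∀ s ∈ Ico 0 T, IsUnit (Γ s x)) :
    IsUnit (Γ T x) := by
  obtain ⟨δ, hδ, hsmall⟩ := mem_nhdsGT_iff_exists_Ioo_subset.mp hlim.eventually_isUnit
  have hδ₂ : 0 < δ / 2 := half_pos hδ
  have hnear : ∀ᶠ s in 𝓝[<] T, IsUnit (Γ (δ / 2) (F s x)) ∧ s ∈ Ioo (max 0 (T - δ / 2)) T :=
    ((hcont _ hδ₂).eventually (Units.isOpen.mem_nhds (hsmall ⟨hδ₂, half_lt_self hδ⟩))).filter_mono
      nhdsWithin_le_nhds |>.and (Ioo_mem_nhdsLT (max_lt hT (by linarith)))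
  obtain ⟨s, hs_unit, hs_lo, hsT⟩ := hnear.exists
  rw [max_lt_iff] at hs_lo
  have hsplit : Γ (δ / 2 + s - T) (F T x) * Γ T x = Γ (δ / 2) (F s x) * Γ s x := by
    rw [← hchain _ (by linarith) T hT.le, ← hchain _ hδ₂.le s hs_lo.1.le, sub_add_cancel]
  have hprod : IsUnit (Γ (δ / 2 + s - T) (F T x) * Γ T x) :=
    hsplit ▸ hs_unit.mul (hbelow s ⟨hs_lo.1.le, hsT⟩)
  exact (IsUnit.mul_left_iff (hsmall ⟨by linarith, by linarith⟩)).mp hprod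

end Semicocycle

theorem semicocycle_values_invertible_general
    {X A : Type*} [NormedAddCommGroup X]
    [NormedRing A] [CompleteSpace A]
    (D : Set X)
    (F : ℝ → X → X)
    (hFmaps : ∀ t ≥ (0:ℝ), Set.MapsTo (F t) D D)
    (hFjc : ContinuousOn (fun p : ℝ × X => F p.1 p.2) (Set.Ici (0:ℝ) ×ˢ D))
    (Γ : ℝ → X → A)
    (hΓc : ∀ t ≥ (0:ℝ), ContinuousOn (Γ t) D)
    (hchain : ∀ t ≥ (0:ℝ), ∀ s ≥ (0:ℝ), ∀ x ∈ D, Γ (t + s) x = Γ t (F s x) * Γ s x)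
    (hΓ0 : ∀ x ∈ D, Tendsto (fun t => Γ t x) (𝓝[>] (0:ℝ)) (𝓝 1)) :
    ∀ t ≥ (0:ℝ), ∀ x ∈ D, IsUnit (Γ t x) := by
  intro t ht x hx
  have hchain_x := fun t ht s hs => hchain t ht s hs x hx
  have hlim : ∀ T ≥ (0:ℝ), Tendsto (fun v => Γ v (F T x)) (𝓝[>] 0) (𝓝 1) :=
    fun T hT => hΓ0 _ (hFmaps T hT hx)
  have horbit : ContinuousOn (fun s => F s x) (Ici 0) :=
    hFjc.comp (Continuous.prodMk_left x).continuousOn fun _ hs => ⟨hs, hx⟩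
  refine Real.forall_nonneg_of_continuous_induction (fun T hT hbelow => ?_)
    (fun T hT => Semicocycle.eventually_isUnit_nhdsGT hchain_x hT (hlim T hT)) t ht
  rcases hT.eq_or_lt with rfl | hTpos
  · rw [Semicocycle.apply_zero hchain_x (hΓ0 x hx) (hlim 0 le_rfl)]
    exact isUnit_one
  · refine Semicocycle.isUnit_of_forall_Ico hchain_x hTpos (hlim T hT) (fun v hv => ?_) hbelow
    exact ((hΓc v hv.le).comp horbit fun _ hs => hFmaps _ hs hx).continuousAt (Ici_mem_nhds hTpos)

/-- Every value `Γ_t(x)` of a semicocycle over a jointly continuous semigroup is an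
invertible element of the Banach algebra `A`. -/
theorem semicocycle_values_invertible
    {X A : Type*} [NormedAddCommGroup X] [NormedSpace ℂ X] [CompleteSpace X]
    [NormedRing A] [NormedAlgebra ℂ A] [CompleteSpace A] [NormOneClass A]
    (D : Set X) (hDo : IsOpen D) (hDc : IsConnected D)
    (F : ℝ → X → X)
    (hFmaps : ∀ t ≥ (0:ℝ), Set.MapsTo (F t) D D)
    (hFsg : ∀ t ≥ (0:ℝ), ∀ s ≥ (0:ℝ), ∀ x ∈ D, F (t + s) x = F t (F s x))
    (hFjc : ContinuousOn (fun p : ℝ × X => F p.1 p.2) (Set.Ici (0:ℝ) ×ˢ D))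
    (Γ : ℝ → X → A)
    (hΓc : ∀ t ≥ (0:ℝ), ContinuousOn (Γ t) D)
    (hchain : ∀ t ≥ (0:ℝ), ∀ s ≥ (0:ℝ), ∀ x ∈ D, Γ (t + s) x = Γ t (F s x) * Γ s x)
    (hΓ0 : ∀ x ∈ D, Tendsto (fun t => Γ t x) (𝓝[>] (0:ℝ)) (𝓝 1)) :
    ∀ t ≥ (0:ℝ), ∀ x ∈ D, IsUnit (Γ t x) :=
  semicocycle_values_invertible_general D F hFmaps hFjc Γ hΓc hchain hΓ0
end

section
/- Let F = {F_t}_{t≥0} be a semigroup on a domain D that acts strictly inside D, and let {Γ_t}_{t≥0} be a semicocycle over F such that each Γ_t is bounded on sets strictly inside D. If the semicocycle is T-continuous at t = 0, then it is T-continuous at every t0 ≥ 0. -/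
open Filter Metric Set Topology

/-- A set `S` lies strictly inside the domain `D`. -/
def StrictlyInside {X : Type*} [NormedAddCommGroup X] (D S : Set X) : Prop :=
  S ⊆ D ∧ Bornology.IsBounded S ∧ ∃ ε > 0, ∀ x ∈ S, ε ≤ infDist x Dᶜ

/-! Near `t₀` the semicocycle identity factors each increment through a short time step:
`Γ_{t₀+s} x - Γ_{t₀} x = (Γ_s (F_{t₀} x) - 1) Γ_{t₀} x` and
`Γ_{t₀-s} x - Γ_{t₀} x = -(Γ_s (F_{t₀-s} x) - 1) Γ_{t₀-s} x`.
All points `F_t x`, `t ≤ t₀ + 1`, `x ∈ S`, lie in one set strictly inside `D`, on which `Γ_s → 1`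
uniformly, so both increments tend to zero uniformly once the second factors are uniformly bounded.
For `Γ_{t₀}` that is the hypothesis; `Γ_t` with `t` slightly below `t₀` is written as
`Γ_{t-r} (F_r x) Γ_r x` for one fixed `r < t₀`, a product of two bounded factors. -/

theorem tendstoUniformlyOn_iff_tendsto_sub {ι α G : Type*} [UniformSpace G] [AddGroup G]
    [IsUniformAddGroup G] {F : ι → α → G} {f : α → G} {p : Filter ι} {s : Set α} :
    TendstoUniformlyOn F f p s ↔
      Tendsto (fun q : ι × α => F q.1 q.2 - f q.2) (p ×ˢ 𝓟 s) (𝓝 0) := by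
  rw [tendstoUniformlyOn_iff_tendsto, uniformity_eq_comap_nhds_zero, tendsto_comap_iff]
  rfl

theorem TendstoUniformlyOn.exists_norm_le_of_nhdsGE_zero {α G : Type*} [SeminormedAddCommGroup G]
    {Φ : ℝ → α → G} {c : G} {s : Set α} (h : TendstoUniformlyOn Φ (fun _ => c) (𝓝[≥] 0) s) :
    ∃ δ > 0, ∀ u ∈ Ico 0 δ, ∀ y ∈ s, ‖Φ u y‖ ≤ ‖c‖ + 1 := by
  obtain ⟨δ, hδ, hclose⟩ :=
    (nhdsGE_basis (0 : ℝ)).eventually_iff.mp (Metric.tendstoUniformlyOn_iff.mp h 1 one_pos)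
  refine ⟨δ, hδ, fun u hu y hy => ?_⟩
  calc ‖Φ u y‖ ≤ ‖c‖ + ‖Φ u y - c‖ := norm_le_insert' _ _
    _ ≤ ‖c‖ + 1 := by
      have := hclose hu y hy
      rw [dist_comm, dist_eq_norm] at this
      linarith

theorem tendsto_sub_const_nhdsGE (a : ℝ) : Tendsto (fun t => t - a) (𝓝[≥] a) (𝓝[≥] 0) := by
  refine tendsto_nhdsWithin_of_tendsto_nhds_of_eventually_within _ ?_
    (eventually_nhdsWithin_of_forall fun t ht => mem_Ici.2 (sub_nonneg.2 ht))
  simpa using ((continuous_sub_right a).tendsto a).mono_left nhdsWithin_le_nhds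

theorem tendsto_const_sub_nhdsWithin_Icc (a : ℝ) :
    Tendsto (fun t => a - t) (𝓝[Icc 0 a] a) (𝓝[≥] 0) := by
  refine tendsto_nhdsWithin_of_tendsto_nhds_of_eventually_within _ ?_
    (eventually_nhdsWithin_of_forall fun t ht => mem_Ici.2 (sub_nonneg.2 ht.2))
  simpa using ((continuous_sub_left a).tendsto a).mono_left nhdsWithin_le_nhds

section Semicocycle

variable {X A : Type*} [NormedRing A] {S S' : Set X}
  {F : ℝ → X → X} {Γ : ℝ → X → A} {t₀ : ℝ}

def orbitSegment (F : ℝ → X → X) (S : Set X) (T : ℝ) : Set X :=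
  {y | ∃ x ∈ S, ∃ t ∈ Icc (0 : ℝ) T, y = F t x}

theorem mapsTo_orbitSegment {t T : ℝ} (ht : t ∈ Icc 0 T) : MapsTo (F t) S (orbitSegment F S T) :=
  fun x hx => ⟨x, hx, t, ht, rfl⟩

theorem isBoundedUnder_norm_semicocycle_nhdsWithin_Icc
    (hchain : ∀ t ≥ (0 : ℝ), ∀ s ≥ (0 : ℝ), ∀ x ∈ S, Γ (t + s) x = Γ t (F s x) * Γ s x)
    (hF : ∀ t ∈ Icc 0 t₀, MapsTo (F t) S S')
    (hΓ0 : TendstoUniformlyOn Γ (fun _ => 1) (𝓝[≥] 0) S')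
    (hbdd : ∀ t ≥ (0 : ℝ), ∃ M, ∀ x ∈ S, ‖Γ t x‖ ≤ M) :
    IsBoundedUnder (· ≤ ·) (𝓝[Icc 0 t₀] t₀ ×ˢ 𝓟 S) fun q => ‖Γ q.1 q.2‖ := by
  obtain ⟨δ, hδ, hΓδ⟩ := hΓ0.exists_norm_le_of_nhdsGE_zero
  set s := max (t₀ - δ / 2) 0
  obtain ⟨M, hM⟩ := hbdd s (le_max_right _ _)
  refine ⟨(‖(1 : A)‖ + 1) * M, eventually_map.mpr ?_⟩
  have hnear : Ioi (t₀ - δ / 2) ∈ 𝓝 t₀ := Ioi_mem_nhds (by linarith)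
  filter_upwards [prod_mem_prod (inter_mem_nhdsWithin (Icc 0 t₀) hnear) (mem_principal_self S)]
    with q ⟨⟨⟨h0, hq⟩, hδq⟩, hx⟩
  have hu : q.1 - s ∈ Ico 0 δ :=
    ⟨sub_nonneg.2 (max_le hδq.le h0), by linarith [le_max_left (t₀ - δ / 2) 0]⟩
  have hs : s ∈ Icc 0 t₀ := ⟨le_max_right _ _, max_le (by linarith) (h0.trans hq)⟩
  have hsplit := hchain (q.1 - s) hu.1 s hs.1 q.2 hx
  rw [sub_add_cancel] at hsplit
  rw [hsplit]
  calc ‖Γ (q.1 - s) (F s q.2) * Γ s q.2‖ ≤ ‖Γ (q.1 - s) (F s q.2)‖ * ‖Γ s q.2‖ := norm_mul_le _ _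
    _ ≤ (‖(1 : A)‖ + 1) * M :=
      mul_le_mul (hΓδ _ hu _ (hF s hs hx)) (hM _ hx) (norm_nonneg _) (by positivity)

theorem tendsto_semicocycle_sub_nhdsGE (ht₀ : 0 ≤ t₀)
    (hchain : ∀ t ≥ (0 : ℝ), ∀ s ≥ (0 : ℝ), ∀ x ∈ S, Γ (t + s) x = Γ t (F s x) * Γ s x)
    (hF : MapsTo (F t₀) S S')
    (hΓ0 : Tendsto (fun q : ℝ × X => Γ q.1 q.2 - 1) (𝓝[≥] 0 ×ˢ 𝓟 S') (𝓝 0))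
    (hbdd : ∃ M, ∀ x ∈ S, ‖Γ t₀ x‖ ≤ M) :
    Tendsto (fun q : ℝ × X => Γ q.1 q.2 - Γ t₀ q.2) (𝓝[≥] t₀ ×ˢ 𝓟 S) (𝓝 0) := by
  obtain ⟨M, hM⟩ := hbdd
  have hmem : Ici t₀ ×ˢ S ∈ 𝓝[≥] t₀ ×ˢ 𝓟 S :=
    prod_mem_prod self_mem_nhdsWithin (mem_principal_self S)
  have hshift : Tendsto (fun q : ℝ × X => (q.1 - t₀, F t₀ q.2)) (𝓝[≥] t₀ ×ˢ 𝓟 S)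
      (𝓝[≥] 0 ×ˢ 𝓟 S') :=
    ((tendsto_sub_const_nhdsGE t₀).comp tendsto_fst).prodMk
      (tendsto_principal.mpr (mem_of_superset hmem fun q hq => hF hq.2))
  have hbound : IsBoundedUnder (· ≤ ·) (𝓝[≥] t₀ ×ˢ 𝓟 S) fun q : ℝ × X => ‖Γ t₀ q.2‖ :=
    ⟨M, eventually_map.mpr (mem_of_superset hmem fun q hq => hM _ hq.2)⟩
  refine ((hΓ0.comp hshift).zero_mul_isBoundedUnder_le hbound).congr' ?_
  filter_upwards [hmem] with q ⟨hq, hx⟩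
  have hsplit := hchain (q.1 - t₀) (sub_nonneg.2 hq) t₀ ht₀ q.2 hx
  rw [sub_add_cancel] at hsplit
  simp [hsplit, sub_mul]

theorem tendsto_semicocycle_sub_nhdsWithin_Icc
    (hchain : ∀ t ≥ (0 : ℝ), ∀ s ≥ (0 : ℝ), ∀ x ∈ S, Γ (t + s) x = Γ t (F s x) * Γ s x)
    (hF : ∀ t ∈ Icc 0 t₀, MapsTo (F t) S S')
    (hΓ0 : Tendsto (fun q : ℝ × X => Γ q.1 q.2 - 1) (𝓝[≥] 0 ×ˢ 𝓟 S') (𝓝 0))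
    (hbdd : IsBoundedUnder (· ≤ ·) (𝓝[Icc 0 t₀] t₀ ×ˢ 𝓟 S) fun q => ‖Γ q.1 q.2‖) :
    Tendsto (fun q : ℝ × X => Γ q.1 q.2 - Γ t₀ q.2) (𝓝[Icc 0 t₀] t₀ ×ˢ 𝓟 S) (𝓝 0) := by
  have hmem : Icc 0 t₀ ×ˢ S ∈ 𝓝[Icc 0 t₀] t₀ ×ˢ 𝓟 S :=
    prod_mem_prod self_mem_nhdsWithin (mem_principal_self S)
  have hshift : Tendsto (fun q : ℝ × X => (t₀ - q.1, F q.1 q.2)) (𝓝[Icc 0 t₀] t₀ ×ˢ 𝓟 S)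
      (𝓝[≥] 0 ×ˢ 𝓟 S') :=
    ((tendsto_const_sub_nhdsWithin_Icc t₀).comp tendsto_fst).prodMk
      (tendsto_principal.mpr (mem_of_superset hmem fun q hq => hF q.1 hq.1 hq.2))
  have hfactor := ((hΓ0.comp hshift).zero_mul_isBoundedUnder_le hbdd).neg
  rw [neg_zero] at hfactor
  refine hfactor.congr' ?_
  filter_upwards [hmem] with q ⟨⟨h0, hq⟩, hx⟩
  have hsplit := hchain (t₀ - q.1) (sub_nonneg.2 hq) q.1 h0 q.2 hx
  rw [sub_add_cancel] at hsplit
  simp [hsplit, sub_mul]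

end Semicocycle

theorem Tcontinuous_at_zero_implies_Tcontinuous_general
    {X A : Type*} [NormedAddCommGroup X]
    [NormedRing A]
    (D : Set X)
    (F : ℝ → X → X)
    -- `F` acts strictly inside `D`:
    (hstrict : ∀ S : Set X, StrictlyInside D S → ∀ t0 > (0:ℝ),
      StrictlyInside D {y | ∃ x ∈ S, ∃ t ∈ Set.Icc (0:ℝ) t0, y = F t x})
    (Γ : ℝ → X → A)
    (hchain : ∀ t ≥ (0:ℝ), ∀ s ≥ (0:ℝ), ∀ x ∈ D, Γ (t + s) x = Γ t (F s x) * Γ s x)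
    -- each `Γ_t` is bounded on sets strictly inside `D`:
    (hbdd : ∀ t ≥ (0:ℝ), ∀ S : Set X, StrictlyInside D S → ∃ M : ℝ, ∀ x ∈ S, ‖Γ t x‖ ≤ M)
    -- `T`-continuity at `t = 0`:
    (hT0 : ∀ S : Set X, StrictlyInside D S →
      TendstoUniformlyOn (fun t x => Γ t x) (fun _ => (1:A)) (𝓝[Set.Ici (0:ℝ)] 0) S) :
    ∀ t0 ≥ (0:ℝ), ∀ S : Set X, StrictlyInside D S →
      TendstoUniformlyOn (fun t x => Γ t x) (Γ t0) (𝓝[Set.Ici (0:ℝ)] t0) S := by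
  intro t₀ ht₀ S hS
  have hchainS : ∀ t ≥ (0 : ℝ), ∀ s ≥ (0 : ℝ), ∀ x ∈ S, Γ (t + s) x = Γ t (F s x) * Γ s x :=
    fun t ht s hs x hx => hchain t ht s hs x (hS.1 hx)
  -- `t₀ + 1` rather than `t₀`, since `hstrict` only applies to positive times.
  have hS' : StrictlyInside D (orbitSegment F S (t₀ + 1)) := hstrict S hS _ (by linarith)
  have hF : ∀ t ∈ Icc 0 t₀, MapsTo (F t) S (orbitSegment F S (t₀ + 1)) :=
    fun t ht => mapsTo_orbitSegment ⟨ht.1, by linarith [ht.2]⟩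
  have hΓ0 := tendstoUniformlyOn_iff_tendsto_sub.mp (hT0 _ hS')
  rw [tendstoUniformlyOn_iff_tendsto_sub, ← Icc_union_Ici_eq_Ici ht₀, nhdsWithin_union, sup_prod]
  exact (tendsto_semicocycle_sub_nhdsWithin_Icc hchainS hF hΓ0
      (isBoundedUnder_norm_semicocycle_nhdsWithin_Icc hchainS hF (hT0 _ hS')
        fun t ht => hbdd t ht S hS)).sup
    (tendsto_semicocycle_sub_nhdsGE ht₀ hchainS (hF t₀ ⟨ht₀, le_rfl⟩) hΓ0 (hbdd t₀ ht₀ S hS))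

/-- If the semigroup acts strictly inside `D`, the semicocycle values are bounded on
sets strictly inside `D`, and the semicocycle is `T`-continuous at `t = 0`, then it is
`T`-continuous at every `t0 ≥ 0`. -/
theorem Tcontinuous_at_zero_implies_Tcontinuous
    {X A : Type*} [NormedAddCommGroup X] [NormedSpace ℂ X] [CompleteSpace X]
    [NormedRing A] [NormedAlgebra ℂ A] [CompleteSpace A] [NormOneClass A]
    (D : Set X) (hDo : IsOpen D) (hDc : IsConnected D)
    (F : ℝ → X → X)
    (hFmaps : ∀ t ≥ (0:ℝ), Set.MapsTo (F t) D D)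
    (hFc : ∀ t ≥ (0:ℝ), ContinuousOn (F t) D)
    (hFsg : ∀ t ≥ (0:ℝ), ∀ s ≥ (0:ℝ), ∀ x ∈ D, F (t + s) x = F t (F s x))
    (hF0 : ∀ x ∈ D, Tendsto (fun t => F t x) (𝓝[>] (0:ℝ)) (𝓝 x))
    -- `F` acts strictly inside `D`:
    (hstrict : ∀ S : Set X, StrictlyInside D S → ∀ t0 > (0:ℝ),
      StrictlyInside D {y | ∃ x ∈ S, ∃ t ∈ Set.Icc (0:ℝ) t0, y = F t x})
    (Γ : ℝ → X → A)
    (hΓc : ∀ t ≥ (0:ℝ), ContinuousOn (Γ t) D)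
    (hchain : ∀ t ≥ (0:ℝ), ∀ s ≥ (0:ℝ), ∀ x ∈ D, Γ (t + s) x = Γ t (F s x) * Γ s x)
    (hΓ0 : ∀ x ∈ D, Tendsto (fun t => Γ t x) (𝓝[>] (0:ℝ)) (𝓝 1))
    -- each `Γ_t` is bounded on sets strictly inside `D`:
    (hbdd : ∀ t ≥ (0:ℝ), ∀ S : Set X, StrictlyInside D S → ∃ M : ℝ, ∀ x ∈ S, ‖Γ t x‖ ≤ M)
    -- `T`-continuity at `t = 0`:
    (hT0 : ∀ S : Set X, StrictlyInside D S →
      TendstoUniformlyOn (fun t x => Γ t x) (fun _ => (1:A)) (𝓝[Set.Ici (0:ℝ)] 0) S) :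
    ∀ t0 ≥ (0:ℝ), ∀ S : Set X, StrictlyInside D S →
      TendstoUniformlyOn (fun t x => Γ t x) (Γ t0) (𝓝[Set.Ici (0:ℝ)] t0) S :=
  Tcontinuous_at_zero_implies_Tcontinuous_general D F hstrict Γ hchain hbdd hT0
end

section
/- Let a : [0,∞) → A be continuous, A a unital Banach algebra. The unique continuous solution u of the integral equation u(t) = 1_A + ∫₀ᵗ a(s) u(s) ds satisfies the bound ‖u(t)‖ ≤ exp(∫₀ᵗ μ(a(s)) ds), where μ(a) := lim_{t→0⁺} (‖1_A + t a‖ − 1)/t. -/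
/-!
Since `u' = a u` on `[0, ∞)`, we have `u (t + h) = (1 + h a(t)) u(t) + o(h)`, so the upper right
Dini derivative of `‖u‖` at `t` is at most `μ(a(t)) ‖u(t)‖`. A fencing argument then compares `‖u‖`
with the solution `exp (∫₀ᵗ μ(a(s)) ds)` of the scalar equation `y' = μ(a(t)) y`, `y(0) = 1`;
fencing needs a strict inequality where the two functions touch, so one compares with the
barriers `(1 + ε) exp (∫₀ᵗ μ(a(s)) ds + ε t)` and lets `ε → 0`. The function `μ` is `1`-Lipschitz,
so `μ ∘ a` is continuous and the integral is a genuine primitive.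
-/

open Filter Set Topology

theorem lipschitzWith_one_of_tendsto_norm_add_smul {E : Type*} [SeminormedAddCommGroup E]
    [NormedSpace ℝ E] {μ : E → ℝ} (e : E) (c : ℝ)
    (hμ : ∀ b, Tendsto (fun t : ℝ => (‖e + t • b‖ - c) / t) (𝓝[>] 0) (𝓝 (μ b))) :
    LipschitzWith 1 μ := by
  refine LipschitzWith.of_le_add fun b b' => le_of_tendsto_of_tendsto (hμ b)
    ((hμ b').add_const (dist b b')) ?_
  filter_upwards [self_mem_nhdsWithin] with t (ht : 0 < t)
  have hdiff : e + t • b - (e + t • b') = t • (b - b') := by rw [smul_sub]; abel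
  have := norm_le_norm_add_norm_sub' (e + t • b) (e + t • b')
  rw [hdiff, norm_smul, Real.norm_of_nonneg ht.le] at this
  rw [dist_eq_norm, div_add' _ _ _ ht.ne', div_le_div_iff_of_pos_right ht]
  linarith

theorem eventually_slope_norm_lt_of_hasDerivWithinAt {A : Type*} [NormedRing A]
    [NormedAlgebra ℝ A] {b : A} {m : ℝ}
    (hm : Tendsto (fun t : ℝ => (‖(1 : A) + t • b‖ - 1) / t) (𝓝[>] 0) (𝓝 m))
    {f : ℝ → A} {x : ℝ} (hf : HasDerivWithinAt f (b * f x) (Ici x) x) {r : ℝ}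
    (hr : m * ‖f x‖ < r) :
    ∀ᶠ z in 𝓝[>] x, slope (fun y => ‖f y‖) x z < r := by
  have hshift : Tendsto (fun z => z - x) (𝓝[>] x) (𝓝[>] 0) := by
    have h : Tendsto (· + -x) (𝓝[>] x) (𝓝[>] (x + -x)) := map_add_right_nhdsGT.le
    simpa only [add_neg_cancel, ← sub_eq_add_neg] using h
  have hslope : Tendsto (slope f x) (𝓝[>] x) (𝓝 (b * f x)) :=
    (hasDerivWithinAt_iff_tendsto_slope' (lt_irrefl x)).1 hf.Ioi_of_Ici
  have hbound : Tendsto (fun z => (‖(1 : A) + (z - x) • b‖ - 1) / (z - x) * ‖f x‖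
      + ‖slope f x z - b * f x‖) (𝓝[>] x) (𝓝 (m * ‖f x‖ + 0)) :=
    ((hm.comp hshift).mul_const _).add (tendsto_iff_norm_sub_tendsto_zero.1 hslope)
  filter_upwards [hbound.eventually_lt_const (by rwa [add_zero]), self_mem_nhdsWithin]
    with z hz (hxz : x < z)
  refine lt_of_le_of_lt ?_ hz
  have hh : 0 < z - x := sub_pos.2 hxz
  have hfz : f z = ((1 : A) + (z - x) • b) * f x + (z - x) • (slope f x z - b * f x) := by
    rw [smul_sub, sub_smul_slope, add_mul, one_mul, smul_mul_assoc, vsub_eq_sub]; abel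
  have hnorm : ‖f z‖ ≤ ‖(1 : A) + (z - x) • b‖ * ‖f x‖ + (z - x) * ‖slope f x z - b * f x‖ := by
    rw [hfz]
    refine (norm_add_le _ _).trans (add_le_add (norm_mul_le _ _) ?_)
    rw [norm_smul, Real.norm_of_nonneg hh.le]
  rw [slope_def_field, div_mul_eq_mul_div, div_add' _ _ _ hh.ne',
    div_le_div_iff_of_pos_right hh]
  linarith

section Primitive

variable {E : Type*} [NormedAddCommGroup E] [NormedSpace ℝ E] [CompleteSpace E]

theorem hasDerivWithinAt_integral_Ici_of_continuousOn {f : ℝ → E} {a b x : ℝ}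
    (hf : ContinuousOn f (Icc a b)) (hx : x ∈ Ico a b) :
    HasDerivWithinAt (fun y => ∫ s in a..y, f s) (f x) (Ici x) x := by
  have hmem : Icc a b ∈ 𝓝[>] x := Icc_mem_nhdsGT_of_mem hx
  have hab : a ≤ b := hx.1.trans hx.2.le
  refine intervalIntegral.integral_hasDerivWithinAt_right (t := Ioi x) ?_ ?_ ?_
  · exact ContinuousOn.intervalIntegrable
      (hf.mono (uIcc_subset_Icc (left_mem_Icc.2 hab) (Ico_subset_Icc_self hx)))
  · exact (hf.stronglyMeasurableAtFilter_nhdsWithin measurableSet_Icc x).filter_mono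
      (nhdsWithin_le_of_mem hmem)
  · exact (hf x (Ico_subset_Icc_self hx)).mono_of_mem_nhdsWithin hmem

theorem hasDerivWithinAt_of_eq_add_integral {u v : ℝ → E} {c : E} {a x : ℝ}
    (hv : ContinuousOn v (Ici a)) (hu : ∀ t ≥ a, u t = c + ∫ s in a..t, v s) (hx : a ≤ x) :
    HasDerivWithinAt u (v x) (Ici x) x :=
  ((hasDerivWithinAt_integral_Ici_of_continuousOn (hv.mono Icc_subset_Ici_self)
    ⟨hx, lt_add_one x⟩).const_add c).congr_of_mem (fun t ht => hu t (hx.trans ht)) self_mem_Ici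

end Primitive

section Gronwall

variable {f g : ℝ → ℝ} {a b δ : ℝ}

theorem image_le_mul_exp_integral_add_of_liminf_slope_right_le_mul
    (hf : ContinuousOn f (Icc a b)) (hg : ContinuousOn g (Icc a b))
    (hf' : ∀ x ∈ Ico a b, ∀ r, g x * f x < r → ∃ᶠ z in 𝓝[>] x, slope f x z < r)
    (ha : f a ≤ δ) (hδ : 0 ≤ δ) {ε : ℝ} (hε : 0 < ε) :
    ∀ ⦃x⦄, x ∈ Icc a b → f x ≤ (δ + ε) * Real.exp ((∫ s in a..x, g s) + ε * (x - a)) := by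
  intro x hx
  have hab : a ≤ b := hx.1.trans hx.2
  set B := fun x => (δ + ε) * Real.exp ((∫ s in a..x, g s) + ε * (x - a))
  have hBpos : ∀ x, 0 < B x := fun x => mul_pos (by linarith) (Real.exp_pos _)
  refine image_le_of_liminf_slope_right_lt_deriv_boundary' (B := B)
    (B' := fun x => B x * (g x + ε)) hf hf' ?_ ?_ ?_ ?_ hx
  · simpa [B] using ha.trans (le_add_of_nonneg_right hε.le)
  · have hprim := intervalIntegral.continuousOn_primitive_interval (μ := MeasureTheory.volume)
      (by rw [uIcc_of_le hab]; exact hg.integrableOn_Icc)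
    rw [uIcc_of_le hab] at hprim
    exact continuousOn_const.mul (Real.continuous_exp.comp_continuousOn
      (hprim.add (by fun_prop)))
  · intro x hx
    refine (((hasDerivWithinAt_integral_Ici_of_continuousOn hg hx).add
      (((hasDerivWithinAt_id x _).sub_const a).const_mul ε)).exp.const_mul (δ + ε)).congr_deriv ?_
    simp only [B, Pi.add_apply, id, mul_one]
    ring
  · intro x _ hfB
    rw [hfB, mul_add, mul_comm]
    exact lt_add_of_pos_right _ (mul_pos (hBpos x) hε)

theorem image_le_mul_exp_integral_of_liminf_slope_right_le_mul
    (hf : ContinuousOn f (Icc a b)) (hg : ContinuousOn g (Icc a b))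
    (hf' : ∀ x ∈ Ico a b, ∀ r, g x * f x < r → ∃ᶠ z in 𝓝[>] x, slope f x z < r)
    (ha : f a ≤ δ) (hδ : 0 ≤ δ) :
    ∀ ⦃x⦄, x ∈ Icc a b → f x ≤ δ * Real.exp (∫ s in a..x, g s) := by
  intro x hx
  have hlim : Tendsto (fun ε => (δ + ε) * Real.exp ((∫ s in a..x, g s) + ε * (x - a)))
      (𝓝[>] 0) (𝓝 (δ * Real.exp (∫ s in a..x, g s))) := by
    have hcont : Continuous fun ε => (δ + ε) * Real.exp ((∫ s in a..x, g s) + ε * (x - a)) := by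
      fun_prop
    simpa using hcont.continuousWithinAt.tendsto (x := 0) (s := Ioi 0)
  exact ge_of_tendsto hlim (eventually_nhdsWithin_of_forall fun ε hε =>
    image_le_mul_exp_integral_add_of_liminf_slope_right_le_mul hf hg hf' ha hδ hε hx)

end Gronwall

/-- The unique continuous solution of `u(t) = 1 + ∫₀ᵗ a(s) u(s) ds` satisfies
`‖u(t)‖ ≤ exp(∫₀ᵗ μ(a(s)) ds)`, where `μ(a) = lim_{t→0⁺} (‖1 + t a‖ - 1)/t`. -/
theorem solution_norm_bound
    {A : Type*} [NormedRing A] [NormedAlgebra ℂ A] [CompleteSpace A] [NormOneClass A]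
    (a u : ℝ → A)
    (ha : ContinuousOn a (Set.Ici (0:ℝ)))
    (hu : ContinuousOn u (Set.Ici (0:ℝ)))
    (hint : ∀ t ≥ (0:ℝ), u t = 1 + ∫ s in (0:ℝ)..t, a s * u s)
    (μ : A → ℝ)
    (hμ : ∀ b : A, Tendsto (fun t : ℝ => (‖(1:A) + t • b‖ - 1) / t) (𝓝[>] (0:ℝ)) (𝓝 (μ b))) :
    ∀ t ≥ (0:ℝ), ‖u t‖ ≤ Real.exp (∫ s in (0:ℝ)..t, μ (a s)) := by
  intro t ht
  have hderiv : ∀ x ≥ 0, HasDerivWithinAt u (a x * u x) (Ici x) x :=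
    fun x hx => hasDerivWithinAt_of_eq_add_integral (ha.mul hu) hint hx
  have hμa : ContinuousOn (fun s => μ (a s)) (Icc 0 t) :=
    (lipschitzWith_one_of_tendsto_norm_add_smul 1 1 hμ).continuous.comp_continuousOn
      (ha.mono Icc_subset_Ici_self)
  have hu0 : ‖u 0‖ ≤ 1 := by simp [hint 0 le_rfl]
  simpa only [one_mul] using image_le_mul_exp_integral_of_liminf_slope_right_le_mul
    (hu.mono Icc_subset_Ici_self).norm hμa
    (fun x hx r hr => (eventually_slope_norm_lt_of_hasDerivWithinAt (hμ (a x)) (hderiv x hx.1)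
      hr).frequently) hu0 zero_le_one (right_mem_Icc.2 ht)
end

section
/- Let B : D → A be continuous and F = {F_t}_{t≥0} ⊂ C(D) a semigroup such that for each x, t ↦ F_t(x) is continuous. For each x ∈ D let u(·,x) be the unique solution of the evolution problem ∂u/∂t(t,x) = B(F_t(x)) u(t,x), u(0,x) = 1_A. Then the family Γ_t(x) := u(t,x) satisfies the chain rule Γ_{t+s}(x) = Γ_t(F_s(x)) Γ_s(x) for all t,s ≥ 0 and x ∈ D, and Γ_t(x) → 1_A as t → 0⁺; i.e., it is a semicocycle over F. -/
/-!
By the semigroup property, both `t ↦ u (t + s) x` and `t ↦ u t (F s x) * u s x` solve the linear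
equation `v' = B (F (t + s) x) v` with value `u s x` at `t = 0`; its coefficient is continuous, so
Grönwall uniqueness identifies them. Right-continuity at `0` is that of a differentiable function.
-/

open Filter Set Topology

section LinearODE

variable {A : Type*} [NormedRing A] [NormedAlgebra ℝ A]

/-- A continuous coefficient is bounded on the compact interval, so `y ↦ a t * y` is Lipschitz
uniformly in `t`. -/
theorem linear_ODE_solution_unique_of_mem_Icc_right {a f g : ℝ → A} {t₀ T : ℝ}
    (ha : ContinuousOn a (Icc t₀ T))
    (hf : ContinuousOn f (Icc t₀ T))
    (hf' : ∀ t ∈ Ico t₀ T, HasDerivWithinAt f (a t * f t) (Ici t) t)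
    (hg : ContinuousOn g (Icc t₀ T))
    (hg' : ∀ t ∈ Ico t₀ T, HasDerivWithinAt g (a t * g t) (Ici t) t)
    (h₀ : f t₀ = g t₀) :
    EqOn f g (Icc t₀ T) := by
  obtain ⟨C, hC⟩ := isCompact_Icc.exists_bound_of_continuousOn ha
  have hLip : ∀ t ∈ Ico t₀ T, LipschitzOnWith C.toNNReal (a t * ·) univ := fun t ht =>
    ((lipschitzWith_smul (a t)).weaken (by
      rw [← NNReal.coe_le_coe, coe_nnnorm]
      exact (hC t (Ico_subset_Icc_self ht)).trans (Real.le_coe_toNNReal C))).lipschitzOnWith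
  exact ODE_solution_unique_of_mem_Icc_right hLip hf hf' (fun _ _ => mem_univ _) hg hg'
    (fun _ _ => mem_univ _) h₀

theorem linear_ODE_solution_comp_add_eq_mul {a φ ψ : ℝ → A} {s t : ℝ} (hs : 0 ≤ s) (ht : 0 ≤ t)
    (ha : ContinuousOn a (Ici 0))
    (hφ : ∀ r ≥ 0, HasDerivWithinAt φ (a r * φ r) (Ici 0) r)
    (hψ : ∀ r ≥ 0, HasDerivWithinAt ψ (a (r + s) * ψ r) (Ici 0) r) (hψ₀ : ψ 0 = 1) :
    φ (t + s) = ψ t * φ s := by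
  have hshift : MapsTo (· + s) (Ici (0 : ℝ)) (Ici 0) := fun r (hr : 0 ≤ r) =>
    add_nonneg hr hs
  have hshift_cont : ContinuousOn (· + s) (Ici (0 : ℝ)) := continuousOn_id.add continuousOn_const
  have hφc : ContinuousOn φ (Ici 0) := fun r hr => (hφ r hr).continuousWithinAt
  have hψc : ContinuousOn ψ (Ici 0) := fun r hr => (hψ r hr).continuousWithinAt
  refine linear_ODE_solution_unique_of_mem_Icc_right (a := fun r => a (r + s))
    (f := fun r => φ (r + s)) (g := fun r => ψ r * φ s) (T := t)
    ((ha.comp hshift_cont hshift).mono Icc_subset_Ici_self)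
    ((hφc.comp hshift_cont hshift).mono Icc_subset_Ici_self) (fun r hr => ?_)
    ((hψc.mono Icc_subset_Ici_self).mul continuousOn_const) (fun r hr => ?_)
    (by simp [hψ₀]) ⟨ht, le_rfl⟩
  · simpa [Function.comp_def] using (hφ (r + s) (hshift hr.1)).scomp r
      ((hasDerivWithinAt_id r (Ici r)).add_const s)
      fun r' (hr' : r ≤ r') => hshift (hr.1.trans hr')
  · simpa [mul_assoc] using ((hψ r hr.1).mono (Ici_subset_Ici.2 hr.1)).mul_const (φ s)

end LinearODE

theorem evolution_solution_is_semicocycle_general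
    {X A : Type*} [NormedAddCommGroup X]
    [NormedRing A] [NormedAlgebra ℂ A]
    (D : Set X)
    (B : X → A) (hB : ContinuousOn B D)
    (F : ℝ → X → X)
    (hFmaps : ∀ t ≥ (0:ℝ), Set.MapsTo (F t) D D)
    (hFsg : ∀ t ≥ (0:ℝ), ∀ s ≥ (0:ℝ), ∀ x ∈ D, F (t + s) x = F t (F s x))
    (hFt : ∀ x ∈ D, ContinuousOn (fun t => F t x) (Set.Ici (0:ℝ)))
    (u : ℝ → X → A)
    (hu0 : ∀ x ∈ D, u 0 x = 1)
    (hud : ∀ x ∈ D, ∀ t ≥ (0:ℝ),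
      HasDerivWithinAt (fun r => u r x) (B (F t x) * u t x) (Set.Ici (0:ℝ)) t) :
    (∀ t ≥ (0:ℝ), ∀ s ≥ (0:ℝ), ∀ x ∈ D, u (t + s) x = u t (F s x) * u s x) ∧
    (∀ x ∈ D, Tendsto (fun t => u t x) (𝓝[>] (0:ℝ)) (𝓝 1)) := by
  refine ⟨fun t ht s hs x hx => ?_, fun x hx => ?_⟩
  · have hFsx : F s x ∈ D := hFmaps s hs hx
    refine linear_ODE_solution_comp_add_eq_mul (ψ := fun r => u r (F s x)) hs ht
      (hB.comp (hFt x hx) fun r hr => hFmaps r hr hx) (hud x hx) (fun r hr => ?_) (hu0 _ hFsx)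
    simpa only [Function.comp_apply, hFsg r hr s hs x hx] using hud (F s x) hFsx r hr
  · simpa [hu0 x hx] using (hud x hx 0 le_rfl).continuousWithinAt.tendsto.mono_left
      (nhdsWithin_mono _ Ioi_subset_Ici_self)

/-- The solution of the evolution problem `∂u/∂t = B(F_t(x)) u`, `u(0,x) = 1`, is a
semicocycle over the semigroup `F`. -/
theorem evolution_solution_is_semicocycle
    {X A : Type*} [NormedAddCommGroup X] [NormedSpace ℂ X] [CompleteSpace X]
    [NormedRing A] [NormedAlgebra ℂ A] [CompleteSpace A] [NormOneClass A]
    (D : Set X) (hDo : IsOpen D) (hDc : IsConnected D)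
    (B : X → A) (hB : ContinuousOn B D)
    (F : ℝ → X → X)
    (hFmaps : ∀ t ≥ (0:ℝ), Set.MapsTo (F t) D D)
    (hFc : ∀ t ≥ (0:ℝ), ContinuousOn (F t) D)
    (hFsg : ∀ t ≥ (0:ℝ), ∀ s ≥ (0:ℝ), ∀ x ∈ D, F (t + s) x = F t (F s x))
    (hFid : ∀ x ∈ D, F 0 x = x)
    (hFt : ∀ x ∈ D, ContinuousOn (fun t => F t x) (Set.Ici (0:ℝ)))
    (hF0 : ∀ x ∈ D, Tendsto (fun t => F t x) (𝓝[>] (0:ℝ)) (𝓝 x))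
    (u : ℝ → X → A)
    (hu0 : ∀ x ∈ D, u 0 x = 1)
    (hud : ∀ x ∈ D, ∀ t ≥ (0:ℝ),
      HasDerivWithinAt (fun r => u r x) (B (F t x) * u t x) (Set.Ici (0:ℝ)) t) :
    (∀ t ≥ (0:ℝ), ∀ s ≥ (0:ℝ), ∀ x ∈ D, u (t + s) x = u t (F s x) * u s x) ∧
    (∀ x ∈ D, Tendsto (fun t => u t x) (𝓝[>] (0:ℝ)) (𝓝 1)) :=
  evolution_solution_is_semicocycle_general D B hB F hFmaps hFsg hFt u hu0 hud
end

section
/- Let D* ⊆ D be a set invariant under the semigroup F = {F_t}, and let {Γ_t} be a semicocycle over F that is differentiable in t with generator B(x) = (d/dt)Γ_t(x)|_{t=0}, B continuous. Then sup_{x∈D*} ‖Γ_t(x)‖ ≤ e^{Kt} for all t ≥ 0 if and only if μ(B(x)) ≤ K for all x ∈ D*, where μ(a) = lim_{t→0⁺}(‖1_A + t a‖ − 1)/t. -/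
/-!
Write `u t = Γ_t(x)`. Since `u` solves `u' = B(F_t x) u`, the first-order expansion gives
`‖u (t + h)‖ = ‖(1 + h B(F_t x)) u t‖ + o(h)`, so the logarithmic norm `μ(B(F_t x))` controls the
right upper Dini derivative of `‖u‖`: it is at most `μ(B(F_t x)) ‖u t‖`. If `μ ∘ B ≤ K` on the
invariant set `D*`, Grönwall's inequality gives `‖u t‖ ≤ e^{Kt}`. Conversely, at `t = 0` the same
expansion reads `‖1 + h B x‖ = ‖u h‖ + o(h) ≤ e^{Kh} + o(h)`, and dividing by `h → 0⁺` gives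
`μ(B x) ≤ K`.
-/

open Filter Set Topology Asymptotics Real

def HasLogNorm {A : Type*} [NormedRing A] [Module ℝ A] (b : A) (m : ℝ) : Prop :=
  Tendsto (fun s : ℝ => (‖(1 : A) + s • b‖ - 1) / s) (𝓝[>] 0) (𝓝 m)

theorem HasDerivWithinAt.tendsto_norm_sub_norm_tangent_div {E : Type*} [NormedAddCommGroup E]
    [NormedSpace ℝ E] {u : ℝ → E} {d : E} {t : ℝ} (hu : HasDerivWithinAt u d (Ioi t) t) :
    Tendsto (fun z => (‖u z‖ - ‖u t + (z - t) • d‖) / (z - t)) (𝓝[>] t) (𝓝 0) := by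
  refine IsLittleO.tendsto_div_nhds_zero (IsBigO.trans_isLittleO ?_ hu.isLittleO)
  refine IsBigO.of_bound' (Eventually.of_forall fun z => ?_)
  rw [Real.norm_eq_abs, sub_sub]
  exact abs_norm_sub_norm_le _ _

section LogNorm

variable {A : Type*} [NormedRing A] [NormedAlgebra ℝ A]

theorem HasLogNorm.le_of_norm_le_exp {u : ℝ → A} {b : A} {m K : ℝ} (hb : HasLogNorm b m)
    (hu : HasDerivWithinAt u b (Ioi 0) 0) (hu0 : u 0 = 1)
    (hbound : ∀ t > 0, ‖u t‖ ≤ exp (K * t)) : m ≤ K := by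
  have htangent : Tendsto (fun t => (‖u t‖ - ‖1 + t • b‖) / t) (𝓝[>] 0) (𝓝 0) := by
    simpa [hu0] using hu.tendsto_norm_sub_norm_tangent_div
  have hslope : Tendsto (fun t => (‖u t‖ - 1) / t) (𝓝[>] 0) (𝓝 m) := by
    refine (add_zero m ▸ hb.add htangent).congr fun t => ?_
    ring
  have hexp : Tendsto (fun t : ℝ => (exp (K * t) - 1) / t) (𝓝[>] 0) (𝓝 K) := by
    have := (((hasDerivAt_id (0 : ℝ)).const_mul K).exp).tendsto_slope_zero_right
    simpa [div_eq_inv_mul] using this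
  refine le_of_tendsto_of_tendsto hslope hexp ?_
  filter_upwards [self_mem_nhdsWithin] with t (ht : 0 < t)
  gcongr
  exact hbound t ht

theorem HasLogNorm.frequently_slope_norm_lt {u : ℝ → A} {b : A} {m t r : ℝ}
    (hb : HasLogNorm b m) (hu : HasDerivWithinAt u (b * u t) (Ioi t) t) (hr : m * ‖u t‖ < r) :
    ∃ᶠ z in 𝓝[>] t, (z - t)⁻¹ * (‖u z‖ - ‖u t‖) < r := by
  have hshift : Tendsto (· - t) (𝓝[>] t) (𝓝[>] 0) := by
    refine tendsto_nhdsWithin_of_tendsto_nhds_of_eventually_within _ ?_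
      (eventually_nhdsWithin_of_forall fun z hz => mem_Ioi.2 (sub_pos.2 hz))
    exact sub_self t ▸ ((continuous_sub_right t).tendsto t).mono_left nhdsWithin_le_nhds
  have htangent := hu.tendsto_norm_sub_norm_tangent_div
  have hbound := (zero_add (m * ‖u t‖) ▸ htangent.add ((hb.comp hshift).mul_const ‖u t‖))
  refine ((hbound.eventually (gt_mem_nhds hr)).and self_mem_nhdsWithin).frequently.mono ?_
  rintro z ⟨hz, hzt : t < z⟩
  refine lt_of_le_of_lt ?_ hz
  have hfactor : u t + (z - t) • (b * u t) = (1 + (z - t) • b) * u t := by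
    rw [add_mul, one_mul, smul_mul_assoc]
  have hmul := norm_mul_le (1 + (z - t) • b) (u t)
  simp only [Function.comp_apply, hfactor]
  rw [inv_mul_eq_div, div_mul_eq_mul_div, ← add_div]
  gcongr
  linarith

theorem norm_le_exp_of_hasLogNorm_le [NormOneClass A] {u a : ℝ → A} {m : ℝ → ℝ} {K T : ℝ}
    (hm : ∀ t ≥ 0, HasLogNorm (a t) (m t)) (hmK : ∀ t ≥ 0, m t ≤ K)
    (hu : ∀ t ≥ 0, HasDerivWithinAt u (a t * u t) (Ici 0) t) (hu0 : u 0 = 1) (hT : 0 ≤ T) :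
    ‖u T‖ ≤ exp (K * T) := by
  have hcont : ContinuousOn (‖u ·‖) (Icc 0 T) := fun t ht =>
    ((hu t ht.1).continuousWithinAt.mono Icc_subset_Ici_self).norm
  have hdini : ∀ t ∈ Ico 0 T, ∀ r, m t * ‖u t‖ < r →
      ∃ᶠ z in 𝓝[>] t, (z - t)⁻¹ * (‖u z‖ - ‖u t‖) < r := fun t ht r hr =>
    (hm t ht.1).frequently_slope_norm_lt ((hu t ht.1).mono (Ioi_subset_Ici ht.1)) hr
  have := le_gronwallBound_of_liminf_deriv_right_le (δ := 1) (K := K) (ε := 0) hcont hdini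
    (by simp [hu0])
    (fun t ht => by simpa using mul_le_mul_of_nonneg_right (hmK t ht.1) (norm_nonneg _))
    T (right_mem_Icc.2 hT)
  simpa [gronwallBound_ε0] using this

end LogNorm

theorem growth_bound_iff_mu_bound_general
    {X A : Type*} [NormedRing A] [NormedAlgebra ℂ A] [NormOneClass A]
    (D Dstar : Set X) (hsub : Dstar ⊆ D)
    (F : ℝ → X → X)
    (hFinv : ∀ t ≥ (0:ℝ), Set.MapsTo (F t) Dstar Dstar)
    (hFid : ∀ x ∈ D, F 0 x = x)
    (B : X → A)
    (Γ : ℝ → X → A)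
    (hΓ0 : ∀ x ∈ D, Γ 0 x = 1)
    (hΓd : ∀ x ∈ D, ∀ t ≥ (0:ℝ),
      HasDerivWithinAt (fun r => Γ r x) (B (F t x) * Γ t x) (Set.Ici (0:ℝ)) t)
    (μ : A → ℝ)
    (hμ : ∀ b : A, Tendsto (fun t : ℝ => (‖(1:A) + t • b‖ - 1) / t) (𝓝[>] (0:ℝ)) (𝓝 (μ b)))
    (K : ℝ) :
    (∀ t ≥ (0:ℝ), ∀ x ∈ Dstar, ‖Γ t x‖ ≤ Real.exp (K * t)) ↔
      (∀ x ∈ Dstar, μ (B x) ≤ K) := by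
  constructor
  · intro hgrowth x hx
    have hd0 := (hΓd x (hsub hx) 0 le_rfl).mono Ioi_subset_Ici_self
    rw [hFid x (hsub hx), hΓ0 x (hsub hx), mul_one] at hd0
    exact HasLogNorm.le_of_norm_le_exp (hμ (B x)) hd0 (hΓ0 x (hsub hx))
      fun t ht => hgrowth t ht.le x hx
  · intro hμK t ht x hx
    exact norm_le_exp_of_hasLogNorm_le (fun s _ => hμ (B (F s x)))
      (fun s hs => hμK _ (hFinv s hs hx)) (hΓd x (hsub hx)) (hΓ0 x (hsub hx)) ht

/-- For a semicocycle `Γ` with continuous generator `B` over a semigroup `F`, and an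
`F`-invariant set `D* ⊆ D`: `sup_{x∈D*} ‖Γ_t(x)‖ ≤ e^{Kt}` for all `t ≥ 0` if and only
if `μ(B(x)) ≤ K` for all `x ∈ D*`. -/
theorem growth_bound_iff_mu_bound
    {X A : Type*} [NormedAddCommGroup X] [NormedSpace ℂ X] [CompleteSpace X]
    [NormedRing A] [NormedAlgebra ℂ A] [CompleteSpace A] [NormOneClass A]
    (D Dstar : Set X) (hDo : IsOpen D) (hDc : IsConnected D) (hsub : Dstar ⊆ D)
    (F : ℝ → X → X)
    (hFmaps : ∀ t ≥ (0:ℝ), Set.MapsTo (F t) D D)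
    (hFinv : ∀ t ≥ (0:ℝ), Set.MapsTo (F t) Dstar Dstar)
    (hFc : ∀ t ≥ (0:ℝ), ContinuousOn (F t) D)
    (hFsg : ∀ t ≥ (0:ℝ), ∀ s ≥ (0:ℝ), ∀ x ∈ D, F (t + s) x = F t (F s x))
    (hFid : ∀ x ∈ D, F 0 x = x)
    (hF0 : ∀ x ∈ D, Tendsto (fun t => F t x) (𝓝[>] (0:ℝ)) (𝓝 x))
    (B : X → A) (hB : ContinuousOn B D)
    (Γ : ℝ → X → A)
    (hΓ0 : ∀ x ∈ D, Γ 0 x = 1)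
    (hΓd : ∀ x ∈ D, ∀ t ≥ (0:ℝ),
      HasDerivWithinAt (fun r => Γ r x) (B (F t x) * Γ t x) (Set.Ici (0:ℝ)) t)
    (μ : A → ℝ)
    (hμ : ∀ b : A, Tendsto (fun t : ℝ => (‖(1:A) + t • b‖ - 1) / t) (𝓝[>] (0:ℝ)) (𝓝 (μ b)))
    (K : ℝ) :
    (∀ t ≥ (0:ℝ), ∀ x ∈ Dstar, ‖Γ t x‖ ≤ Real.exp (K * t)) ↔
      (∀ x ∈ Dstar, μ (B x) ≤ K) :=
  growth_bound_iff_mu_bound_general D Dstar hsub F hFinv hFid B Γ hΓ0 hΓd μ hμ K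
end

section
/- Let D be a bounded domain in a complex Banach space X, F = {F_t} ⊂ Hol(D) a T-continuous semigroup, and B ∈ Hol(D, A). Then the semicocycle {Γ_t} obtained by solving (d/dt)Γ_t(x) = B(F_t(x))Γ_t(x), Γ_0(x) = 1_A, is uniformly jointly continuous: for every x0 ∈ D there are a neighborhood U of x0 and δ > 0 with sup_{x∈U}‖Γ_t(x) − 1_A‖ → 0 as t → 0⁺, and the corresponding property at every t0 ≥ 0. -/
open Filter Metric Set Topology

/-!
`T`-continuity makes `(x, t) ↦ F_t x` jointly continuous near `x₀`, so by compactness of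
`[0, T]` the coefficient `B ∘ F` is bounded on `[0, T] × U` for a neighbourhood `U` of `x₀`.
Grönwall then bounds `Γ` on `[0, T] × U`, so `t ↦ Γ_t x` is Lipschitz on `[0, T]` uniformly
in `x ∈ U`.
-/

theorem continuousWithinAt_uncurry_of_tendstoUniformlyOn {ι X Y : Type*} [TopologicalSpace ι]
    [TopologicalSpace X] [UniformSpace Y] {G : ι → X → Y} {I : Set ι} {S : Set X} {t : ι}
    {x₀ : X} (hS : S ∈ 𝓝 x₀) (hG : TendstoUniformlyOn G (G t) (𝓝[I] t) S)
    (hGt : ContinuousAt (G t) x₀) :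
    ContinuousWithinAt (fun p : X × ι => G p.2 p.1) (univ ×ˢ I) (x₀, t) := by
  have hsnd : Tendsto Prod.snd (𝓝[univ ×ˢ I] (x₀, t)) (𝓝[I] t) :=
    continuousWithinAt_snd.tendsto_nhdsWithin fun p hp => hp.2
  have hfst : Tendsto Prod.fst (𝓝[univ ×ˢ I] (x₀, t)) (𝓝[S] x₀) := by
    rw [nhdsWithin_eq_nhds.2 hS]
    exact continuousAt_fst.tendsto.mono_left nhdsWithin_le_nhds
  exact TendstoUniformlyOn.tendsto_comp (fun u hu => hsnd.eventually (hG u hu))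
    hGt.continuousWithinAt hfst

theorem exists_strictlyInside_mem_nhds {X : Type*} [NormedAddCommGroup X] {D : Set X}
    {x₀ : X} (hD : IsOpen D) (hDc : Dᶜ.Nonempty) (hx₀ : x₀ ∈ D) :
    ∃ S ∈ 𝓝 x₀, StrictlyInside D S := by
  set r := infDist x₀ Dᶜ / 2 with hr_def
  have hr : 0 < r := half_pos <|
    (hD.isClosed_compl.notMem_iff_infDist_pos hDc).1 (not_not_intro hx₀)
  have hfar : ∀ x ∈ closedBall x₀ r, r ≤ infDist x Dᶜ := fun x hx => by
    have := infDist_le_infDist_add_dist (s := Dᶜ) (x := x₀) (y := x)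
    rw [mem_closedBall'] at hx
    linarith
  have hsub : closedBall x₀ r ⊆ D := fun x hx => by
    by_contra hxD
    linarith [hfar x hx, infDist_zero_of_mem (show x ∈ Dᶜ from hxD)]
  exact ⟨closedBall x₀ r, closedBall_mem_nhds x₀ hr, hsub, isBounded_closedBall, r, hr, hfar⟩

theorem continuousWithinAt_uncurry_of_forall_strictlyInside {X : Type*} [NormedAddCommGroup X]
    [NormedSpace ℂ X] {D : Set X} {x₀ : X} {t : ℝ} {F : ℝ → X → X} (hDo : IsOpen D)
    (hDb : Bornology.IsBounded D) (hx₀ : x₀ ∈ D) (hFt : ContinuousAt (F t) x₀)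
    (hFT : ∀ S, StrictlyInside D S → TendstoUniformlyOn F (F t) (𝓝[Ici 0] t) S) :
    ContinuousWithinAt (fun p : X × ℝ => F p.2 p.1) (univ ×ˢ Ici 0) (x₀, t) := by
  -- For trivial `X` no set lies strictly inside `D = X` (`infDist x ∅ = 0`), but then
  -- continuity is automatic; otherwise the bounded set `D` has nonempty complement.
  rcases subsingleton_or_nontrivial X with _ | _
  · exact (continuous_of_const fun _ _ => Subsingleton.elim _ _).continuousWithinAt
  · have hDc : Dᶜ.Nonempty :=
      nonempty_compl.2 fun h => NormedSpace.unbounded_univ ℂ X (h ▸ hDb)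
    obtain ⟨S, hS, hSD⟩ := exists_strictlyInside_mem_nhds hDo hDc hx₀
    exact continuousWithinAt_uncurry_of_tendstoUniformlyOn hS (hFT S hSD) hFt

section CompactIndexSet

variable {ι X Y : Type*} [TopologicalSpace ι] [TopologicalSpace X] [TopologicalSpace Y]
  {G : ι → X → Y} {I K : Set ι} {x₀ : X}

theorem eventually_forall_mem_of_continuousWithinAt_uncurry {U : Set Y} (hK : IsCompact K)
    (hKI : K ⊆ I) (hU : IsOpen U)
    (hG : ∀ t ∈ K, ContinuousWithinAt (fun p : X × ι => G p.2 p.1) (univ ×ˢ I) (x₀, t))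
    (hmem : ∀ t ∈ K, G t x₀ ∈ U) :
    ∀ᶠ x in 𝓝 x₀, ∀ t ∈ K, G t x ∈ U := by
  have hP : ∀ t ∈ K, ∀ᶠ p : X × ι in 𝓝 (x₀, t), p.2 ∈ I → G p.2 p.1 ∈ U := fun t ht => by
    have := (hG t ht).preimage_mem_nhdsWithin (hU.mem_nhds (hmem t ht))
    filter_upwards [mem_nhdsWithin_iff_eventually.1 this] with p hp hpI
    exact hp ⟨mem_univ _, hpI⟩
  filter_upwards [hK.eventually_forall_of_forall_eventually
    (P := fun x t => t ∈ I → G t x ∈ U) hP] with x hx t ht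
  exact hx t ht (hKI ht)

theorem exists_bound_eventually_forall_mem {E : Type*} [SeminormedAddCommGroup E] {D : Set Y}
    {B : Y → E} (hK : IsCompact K) (hKI : K ⊆ I) (hDo : IsOpen D) (hB : ContinuousOn B D)
    (hG : ∀ t ∈ K, ContinuousWithinAt (fun p : X × ι => G p.2 p.1) (univ ×ˢ I) (x₀, t))
    (hmem : ∀ t ∈ K, G t x₀ ∈ D) :
    ∃ M, ∀ᶠ x in 𝓝 x₀, ∀ t ∈ K, G t x ∈ D ∧ ‖B (G t x)‖ ≤ M := by
  have htraj : ContinuousOn (fun t => B (G t x₀)) K := fun t ht =>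
    ((hB.continuousAt (hDo.mem_nhds (hmem t ht))).comp_continuousWithinAt (f := fun s => G s x₀)
      ((hG t ht).comp (continuous_const.prodMk continuous_id).continuousWithinAt
        fun s hs => ⟨mem_univ _, hs⟩)).mono hKI
  obtain ⟨M, hM⟩ := hK.exists_bound_of_continuousOn htraj
  have hU : IsOpen (D ∩ B ⁻¹' {e | ‖e‖ < M + 1}) :=
    hB.isOpen_inter_preimage hDo (isOpen_lt continuous_norm continuous_const)
  refine ⟨M + 1, ?_⟩
  filter_upwards [eventually_forall_mem_of_continuousWithinAt_uncurry hK hKI hU hG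
    fun t ht => ⟨hmem t ht, by simpa using (hM t ht).trans_lt (lt_add_one M)⟩] with x hx t ht
  exact ⟨(hx t ht).1, (hx t ht).2.le⟩

end CompactIndexSet

section LinearEquation

variable {A : Type*} [NormedRing A] [NormedSpace ℝ A] {f a : ℝ → A} {M T : ℝ}

theorem norm_le_mul_exp_of_hasDerivWithinAt_mul
    (hf : ∀ s ≥ 0, HasDerivWithinAt f (a s * f s) (Ici 0) s) (ha : ∀ s ∈ Icc 0 T, ‖a s‖ ≤ M) :
    ∀ s ∈ Icc 0 T, ‖f s‖ ≤ ‖f 0‖ * Real.exp (M * s) := fun s hs => by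
  have := norm_le_gronwallBound_of_norm_deriv_right_le (ε := 0)
    (fun u hu => (hf u hu.1).continuousWithinAt.mono Icc_subset_Ici_self)
    (fun u hu => (hf u hu.1).mono (Ici_subset_Ici.2 hu.1)) le_rfl
    (fun u hu => by
      rw [add_zero]
      exact (norm_mul_le _ _).trans
        (mul_le_mul_of_nonneg_right (ha u (Ico_subset_Icc_self hu)) (norm_nonneg _)))
    s hs
  rwa [gronwallBound_ε0, sub_zero] at this

theorem norm_sub_le_of_hasDerivWithinAt_mul
    (hf : ∀ s ≥ 0, HasDerivWithinAt f (a s * f s) (Ici 0) s) (ha : ∀ s ∈ Icc 0 T, ‖a s‖ ≤ M)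
    {s s' : ℝ} (hs : s ∈ Icc 0 T) (hs' : s' ∈ Icc 0 T) :
    ‖f s' - f s‖ ≤ M * (‖f 0‖ * Real.exp (M * T)) * |s' - s| := by
  have hM : 0 ≤ M := (norm_nonneg _).trans (ha s hs)
  have hderiv : ∀ u ∈ Icc 0 T, ‖a u * f u‖ ≤ M * (‖f 0‖ * Real.exp (M * T)) := fun u hu =>
    calc ‖a u * f u‖ ≤ ‖a u‖ * ‖f u‖ := norm_mul_le _ _
      _ ≤ M * (‖f 0‖ * Real.exp (M * u)) :=
        mul_le_mul (ha u hu) (norm_le_mul_exp_of_hasDerivWithinAt_mul hf ha u hu)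
          (norm_nonneg _) hM
      _ ≤ M * (‖f 0‖ * Real.exp (M * T)) := by gcongr; exact hu.2
  simpa only [Real.norm_eq_abs] using (convex_Icc 0 T).norm_image_sub_le_of_norm_hasDerivWithin_le
    (fun u hu => (hf u hu.1).mono Icc_subset_Ici_self) hderiv hs hs'

end LinearEquation

theorem tendstoUniformlyOn_of_norm_sub_le_mul_abs {α E : Type*} [SeminormedAddCommGroup E]
    {G : ℝ → α → E} {U : Set α} {T L t₀ : ℝ} (ht₀ : t₀ ∈ Ico 0 T)
    (hG : ∀ x ∈ U, ∀ s ∈ Icc 0 T, ∀ s' ∈ Icc 0 T, ‖G s' x - G s x‖ ≤ L * |s' - s|) :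
    TendstoUniformlyOn G (G t₀) (𝓝[Ici 0] t₀) U := by
  rw [Metric.tendstoUniformlyOn_iff]
  intro ε hε
  have hsmall : Tendsto (fun s => L * |s - t₀|) (𝓝 t₀) (𝓝 0) :=
    (continuous_const.mul (continuous_id.sub continuous_const).abs).tendsto' t₀ 0 (by simp)
  have hIcc : Icc 0 T ∈ 𝓝[Ici 0] t₀ :=
    mem_nhdsWithin.2 ⟨Iio T, isOpen_Iio, ht₀.2, fun s hs => ⟨hs.2, hs.1.le⟩⟩
  filter_upwards [hIcc, nhdsWithin_le_nhds (hsmall.eventually (gt_mem_nhds hε))] with s hs hsε x hx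
  rw [dist_eq_norm]
  rw [abs_sub_comm] at hsε
  exact (hG x hx s hs t₀ (Ico_subset_Icc_self ht₀)).trans_lt hsε

theorem holomorphic_generated_semicocycle_is_UJC_general
    {X A : Type*} [NormedAddCommGroup X] [NormedSpace ℂ X]
    [NormedRing A] [NormedAlgebra ℂ A] [NormOneClass A]
    (D : Set X) (hDo : IsOpen D) (hDb : Bornology.IsBounded D)
    (F : ℝ → X → X)
    (hFmaps : ∀ t ≥ (0:ℝ), Set.MapsTo (F t) D D)
    (hFhol : ∀ t ≥ (0:ℝ), DifferentiableOn ℂ (F t) D)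
    -- `T`-continuity of the semigroup:
    (hFT : ∀ t0 ≥ (0:ℝ), ∀ S : Set X, StrictlyInside D S →
      TendstoUniformlyOn (fun t x => F t x) (F t0) (𝓝[Set.Ici (0:ℝ)] t0) S)
    (B : X → A) (hB : DifferentiableOn ℂ B D)
    (Γ : ℝ → X → A)
    (hΓ0 : ∀ x ∈ D, Γ 0 x = 1)
    (hΓd : ∀ x ∈ D, ∀ t ≥ (0:ℝ),
      HasDerivWithinAt (fun r => Γ r x) (B (F t x) * Γ t x) (Set.Ici (0:ℝ)) t) :
    ∀ t0 ≥ (0:ℝ), ∀ x0 ∈ D, ∃ U ∈ 𝓝 x0, U ⊆ D ∧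
      TendstoUniformlyOn (fun t x => Γ t x) (Γ t0) (𝓝[Set.Ici (0:ℝ)] t0) U := by
  intro t0 ht0 x0 hx0
  have hjoint : ∀ t ∈ Icc 0 (t0 + 1),
      ContinuousWithinAt (fun p : X × ℝ => F p.2 p.1) (univ ×ˢ Ici 0) (x0, t) := fun t ht =>
    continuousWithinAt_uncurry_of_forall_strictlyInside hDo hDb hx0
      ((hFhol t ht.1).continuousOn.continuousAt (hDo.mem_nhds hx0)) (hFT t ht.1)
  obtain ⟨M, hM⟩ := exists_bound_eventually_forall_mem isCompact_Icc Icc_subset_Ici_self hDo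
    hB.continuousOn hjoint fun t ht => hFmaps t ht.1 hx0
  obtain ⟨U, hU, hUM⟩ := hM.exists_mem
  refine ⟨U ∩ D, inter_mem hU (hDo.mem_nhds hx0), inter_subset_right, ?_⟩
  refine tendstoUniformlyOn_of_norm_sub_le_mul_abs (L := M * Real.exp (M * (t0 + 1)))
    ⟨ht0, lt_add_one t0⟩ fun x hx s hs s' hs' => ?_
  simpa only [hΓ0 x hx.2, norm_one, one_mul] using norm_sub_le_of_hasDerivWithinAt_mul (hΓd x hx.2)
    (fun s hs => (hUM x hx.1 s hs).2) hs hs'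

/-- On a bounded domain `D` in a complex Banach space, the semicocycle obtained by
solving `(d/dt)Γ_t(x) = B(F_t(x))Γ_t(x)`, `Γ_0 = 1`, with `B` holomorphic, over a
`T`-continuous semigroup of holomorphic self-mappings, is uniformly jointly
continuous. -/
theorem holomorphic_generated_semicocycle_is_UJC
    {X A : Type*} [NormedAddCommGroup X] [NormedSpace ℂ X] [CompleteSpace X]
    [NormedRing A] [NormedAlgebra ℂ A] [CompleteSpace A] [NormOneClass A]
    (D : Set X) (hDo : IsOpen D) (hDc : IsConnected D) (hDb : Bornology.IsBounded D)
    (F : ℝ → X → X)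
    (hFmaps : ∀ t ≥ (0:ℝ), Set.MapsTo (F t) D D)
    (hFhol : ∀ t ≥ (0:ℝ), DifferentiableOn ℂ (F t) D)
    (hFsg : ∀ t ≥ (0:ℝ), ∀ s ≥ (0:ℝ), ∀ x ∈ D, F (t + s) x = F t (F s x))
    (hFid : ∀ x ∈ D, F 0 x = x)
    (hF0 : ∀ x ∈ D, Tendsto (fun t => F t x) (𝓝[>] (0:ℝ)) (𝓝 x))
    -- `T`-continuity of the semigroup:
    (hFT : ∀ t0 ≥ (0:ℝ), ∀ S : Set X, StrictlyInside D S →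
      TendstoUniformlyOn (fun t x => F t x) (F t0) (𝓝[Set.Ici (0:ℝ)] t0) S)
    (B : X → A) (hB : DifferentiableOn ℂ B D)
    (Γ : ℝ → X → A)
    (hΓ0 : ∀ x ∈ D, Γ 0 x = 1)
    (hΓd : ∀ x ∈ D, ∀ t ≥ (0:ℝ),
      HasDerivWithinAt (fun r => Γ r x) (B (F t x) * Γ t x) (Set.Ici (0:ℝ)) t) :
    ∀ t0 ≥ (0:ℝ), ∀ x0 ∈ D, ∃ U ∈ 𝓝 x0, U ⊆ D ∧
      TendstoUniformlyOn (fun t x => Γ t x) (Γ t0) (𝓝[Set.Ici (0:ℝ)] t0) U :=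
  holomorphic_generated_semicocycle_is_UJC_general D hDo hDb F hFmaps hFhol hFT B hB Γ hΓ0 hΓd
end

section
/- Let X = ℓ¹ and define on the open unit ball D the semigroup F_t(x) = (e^{-kt} x_k)_{k≥1} and Γ_t(x) = exp(Σ_{k≥1} x_k(1 − e^{-kt})). Then {Γ_t}_{t≥0} is a (complex-valued) semicocycle over F (the chain rule Γ_t(F_s(x))Γ_s(x) = Γ_{t+s}(x) holds and Γ_t(x) → 1 as t → 0⁺ pointwise), but it is not uniformly jointly continuous: for every x ∈ D and every neighborhood U of x, the convergence Γ_t → 1 as t → 0⁺ fails to be uniform on U. -/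
/-!
Writing `Γ_t(x) = exp Λ_t(x)` with `Λ_t(x) = Σ_k x_k (1 - e^{-kt})`, the chain rule is the
coordinatewise identity `e^{-ks}(1 - e^{-kt}) + (1 - e^{-ks}) = 1 - e^{-k(t+s)}`, and continuity
in `t` follows from dominated convergence with majorant `|x_k|`. Uniform joint continuity fails
because `Λ_t` is linear in `x` with coefficients that are not uniformly small in `k`: perturbing
`x` by `c e_n` multiplies `Γ_{1/n}` by the constant `exp (c (1 - e^{-1}))`, so along
`t = 1/n → 0` and the points `x + c e_n`, which all stay `c`-close to `x`, `Γ` stays away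
from `1`.
-/

open Filter Metric Set Topology

noncomputable section

/-- The semigroup `F_t(x) = (e^{-kt} x_k)_{k≥1}` on `ℓ¹` (here indexed by `ℕ`, with
`k`-th coordinate multiplied by `e^{-(k+1)t}`; for `t < 0` we use `max t 0`). -/
def Fl1 (t : ℝ) (x : lp (fun _ : ℕ => ℂ) 1) : lp (fun _ : ℕ => ℂ) 1 :=
  ⟨fun k => (Real.exp (-((k : ℝ) + 1) * max t 0) : ℂ) * x k, by
    apply memℓp_gen
    have hs : Summable fun k : ℕ => ‖x k‖ ^ (1 : ENNReal).toReal :=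
      (lp.memℓp x).summable (by norm_num)
    apply hs.of_nonneg_of_le (fun k => by positivity)
    intro k
    simp only [ENNReal.toReal_one, Real.rpow_one, norm_mul]
    have h1 : ‖((Real.exp (-((k : ℝ) + 1) * max t 0) : ℝ) : ℂ)‖ ≤ 1 := by
      rw [Complex.norm_real, Real.norm_eq_abs, abs_of_pos (Real.exp_pos _)]
      apply Real.exp_le_one_iff.mpr
      have : (0:ℝ) ≤ ((k : ℝ) + 1) * max t 0 := by positivity
      linarith
    calc ‖((Real.exp (-((k : ℝ) + 1) * max t 0) : ℝ) : ℂ)‖ * ‖x k‖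
        ≤ 1 * ‖x k‖ := by gcongr
      _ = ‖x k‖ := one_mul _⟩

/-- The semicocycle `Γ_t(x) = exp (Σ_k x_k (1 − e^{-kt}))`. -/
def Gl1 (t : ℝ) (x : lp (fun _ : ℕ => ℂ) 1) : ℂ :=
  Complex.exp (∑' k : ℕ, x k * (1 - (Real.exp (-((k : ℝ) + 1) * max t 0) : ℂ)))

local notation "ℓ¹" => lp (fun _ : ℕ => ℂ) 1

theorem lp.summable_norm_of_one {α : Type*} {E : α → Type*} [∀ i, NormedAddCommGroup (E i)]
    (x : lp E 1) : Summable fun i => ‖x i‖ := by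
  simpa using (lp.memℓp x).summable (by norm_num)

theorem TendstoUniformlyOn.tendsto_comp_of_mem {ι α β γ : Type*} [UniformSpace β]
    {F : ι → α → β} {c : β} {p : Filter ι} {s : Set α}
    (h : TendstoUniformlyOn F (fun _ => c) p s) {l : Filter γ} {u : γ → ι} {v : γ → α}
    (hu : Tendsto u l p) (hv : ∀ᶠ n in l, v n ∈ s) :
    Tendsto (fun n => F (u n) (v n)) l (𝓝 c) :=
  Uniform.tendsto_nhds_right.mpr <|
    (tendstoUniformlyOn_iff_tendsto.mp h).comp (hu.prodMk (tendsto_principal.mpr hv))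

def decay (k : ℕ) (t : ℝ) : ℝ := Real.exp (-((k : ℝ) + 1) * max t 0)

theorem decay_pos (k : ℕ) (t : ℝ) : 0 < decay k t := Real.exp_pos _

theorem decay_le_one (k : ℕ) (t : ℝ) : decay k t ≤ 1 :=
  Real.exp_le_one_iff.mpr <| by
    have : (0 : ℝ) ≤ ((k : ℝ) + 1) * max t 0 := by positivity
    linarith

theorem decay_add (k : ℕ) {t s : ℝ} (ht : 0 ≤ t) (hs : 0 ≤ s) :
    decay k s * decay k t = decay k (t + s) := by
  simp only [decay, ← Real.exp_add, max_eq_left ht, max_eq_left hs,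
    max_eq_left (add_nonneg ht hs)]
  ring_nf

theorem decay_zero (k : ℕ) : decay k 0 = 1 := by simp [decay]

theorem decay_one_div_succ (n : ℕ) : decay n (1 / ((n : ℝ) + 1)) = Real.exp (-1) := by
  rw [decay, max_eq_left (by positivity)]
  field_simp

theorem continuous_decay (k : ℕ) : Continuous (decay k) := by
  unfold decay
  fun_prop

theorem norm_one_sub_decay_le_one (k : ℕ) (t : ℝ) : ‖1 - (decay k t : ℂ)‖ ≤ 1 := by
  rw [← Complex.ofReal_one, ← Complex.ofReal_sub, Complex.norm_real, Real.norm_eq_abs,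
    abs_of_nonneg (sub_nonneg.mpr (decay_le_one k t))]
  linarith [decay_pos k t]

theorem norm_mul_one_sub_decay_le (x : ℓ¹) (k : ℕ) (t : ℝ) :
    ‖x k * (1 - (decay k t : ℂ))‖ ≤ ‖x k‖ := by
  rw [norm_mul]
  exact mul_le_of_le_one_right (norm_nonneg _) (norm_one_sub_decay_le_one k t)

theorem summable_mul_one_sub_decay (x : ℓ¹) (t : ℝ) :
    Summable fun k => x k * (1 - (decay k t : ℂ)) :=
  .of_norm_bounded (lp.summable_norm_of_one x) (norm_mul_one_sub_decay_le x · t)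

def gl1Exponent (t : ℝ) (x : ℓ¹) : ℂ := ∑' k, x k * (1 - (decay k t : ℂ))

theorem Gl1_eq_exp_gl1Exponent (t : ℝ) (x : ℓ¹) : Gl1 t x = Complex.exp (gl1Exponent t x) :=
  rfl

theorem gl1Exponent_add (t : ℝ) (x y : ℓ¹) :
    gl1Exponent t (x + y) = gl1Exponent t x + gl1Exponent t y := by
  rw [gl1Exponent, gl1Exponent, gl1Exponent,
    ← (summable_mul_one_sub_decay x t).tsum_add (summable_mul_one_sub_decay y t)]
  exact tsum_congr fun k => by rw [lp.coeFn_add, Pi.add_apply, add_mul]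

theorem gl1Exponent_single (t : ℝ) (n : ℕ) (c : ℂ) :
    gl1Exponent t (lp.single 1 n c) = c * (1 - (decay n t : ℂ)) := by
  rw [gl1Exponent, tsum_eq_single n fun k hk => by
    rw [lp.single_apply_ne (E := fun _ : ℕ => ℂ) 1 n c hk, zero_mul],
    lp.single_apply_self]

theorem gl1Exponent_Fl1_add {t s : ℝ} (ht : 0 ≤ t) (hs : 0 ≤ s) (x : ℓ¹) :
    gl1Exponent t (Fl1 s x) + gl1Exponent s x = gl1Exponent (t + s) x := by
  rw [gl1Exponent, gl1Exponent, gl1Exponent,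
    ← (summable_mul_one_sub_decay (Fl1 s x) t).tsum_add (summable_mul_one_sub_decay x s)]
  refine tsum_congr fun k => ?_
  have hF : Fl1 s x k = (decay k s : ℂ) * x k := rfl
  rw [hF, ← decay_add k ht hs, Complex.ofReal_mul]
  ring

theorem gl1Exponent_zero (x : ℓ¹) : gl1Exponent 0 x = 0 := by
  simp [gl1Exponent, decay_zero]

theorem continuous_gl1Exponent (x : ℓ¹) : Continuous fun t => gl1Exponent t x :=
  continuous_tsum (fun k => by have := continuous_decay k; fun_prop)
    (lp.summable_norm_of_one x) (norm_mul_one_sub_decay_le x)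

theorem Gl1_Fl1_mul_Gl1 {t s : ℝ} (ht : 0 ≤ t) (hs : 0 ≤ s) (x : ℓ¹) :
    Gl1 t (Fl1 s x) * Gl1 s x = Gl1 (t + s) x := by
  simp only [Gl1_eq_exp_gl1Exponent, ← Complex.exp_add, gl1Exponent_Fl1_add ht hs]

theorem tendsto_Gl1_nhds_one (x : ℓ¹) : Tendsto (fun t => Gl1 t x) (𝓝 0) (𝓝 1) :=
  (Complex.continuous_exp.comp (continuous_gl1Exponent x)).tendsto' 0 1 <| by
    simp [gl1Exponent_zero]

theorem Gl1_add_single (t : ℝ) (x : ℓ¹) (n : ℕ) (c : ℂ) :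
    Gl1 t (x + lp.single 1 n c) = Gl1 t x * Complex.exp (c * (1 - (decay n t : ℂ))) := by
  rw [Gl1_eq_exp_gl1Exponent, Gl1_eq_exp_gl1Exponent, gl1Exponent_add, gl1Exponent_single,
    Complex.exp_add]

theorem exp_mul_one_sub_exp_neg_one_ne_one {c : ℝ} (hc : 0 < c) :
    Complex.exp (c * (1 - (Real.exp (-1) : ℂ))) ≠ 1 := by
  have hpos : 0 < c * (1 - Real.exp (-1)) :=
    mul_pos hc (sub_pos.mpr (Real.exp_lt_one_iff.mpr (by norm_num)))
  rw [← Complex.ofReal_one, ← Complex.ofReal_sub, ← Complex.ofReal_mul, ← Complex.ofReal_exp,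
    Ne, Complex.ofReal_inj, Real.exp_eq_one_iff]
  exact hpos.ne'

theorem not_tendstoUniformlyOn_Gl1 (x : ℓ¹) {V : Set ℓ¹} (hV : V ∈ 𝓝 x) :
    ¬ TendstoUniformlyOn (fun t y => Gl1 t y) (fun _ => (1 : ℂ)) (𝓝[>] (0 : ℝ)) V := by
  intro hunif
  obtain ⟨r, hr, hball⟩ := Metric.mem_nhds_iff.mp hV
  set c := r / 2
  have hc : 0 < c := half_pos hr
  have hmem : ∀ n, x + lp.single 1 n (c : ℂ) ∈ V := fun n => hball <| by
    rw [mem_ball, dist_eq_norm, add_sub_cancel_left, lp.norm_single (by norm_num),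
      Complex.norm_real, Real.norm_of_nonneg hc.le]
    exact half_lt_self hr
  have htime : Tendsto (fun n : ℕ => 1 / ((n : ℝ) + 1)) atTop (𝓝[>] 0) :=
    tendsto_nhdsWithin_iff.mpr ⟨tendsto_one_div_add_atTop_nhds_zero_nat,
      .of_forall fun _ => mem_Ioi.mpr Nat.one_div_pos_of_nat⟩
  have hto_one := hunif.tendsto_comp_of_mem htime (.of_forall hmem)
  have hto_const : Tendsto (fun n : ℕ => Gl1 (1 / ((n : ℝ) + 1)) (x + lp.single 1 n (c : ℂ)))
      atTop (𝓝 (1 * Complex.exp (c * (1 - (Real.exp (-1) : ℂ))))) := by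
    simp only [Gl1_add_single, decay_one_div_succ]
    exact ((tendsto_Gl1_nhds_one x).comp (htime.mono_right nhdsWithin_le_nhds)).mul_const _
  rw [one_mul] at hto_const
  exact exp_mul_one_sub_exp_neg_one_ne_one hc (tendsto_nhds_unique hto_const hto_one)

/-- On the open unit ball `D` of `ℓ¹`, the family `Γ_t` is a semicocycle over `F`, but
it is not uniformly jointly continuous at `t = 0` at any point of `D`. -/
theorem ell1_semicocycle_not_UJC :
    (∀ t ≥ (0:ℝ), ∀ s ≥ (0:ℝ), ∀ x : lp (fun _ : ℕ => ℂ) 1, ‖x‖ < 1 →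
        Gl1 t (Fl1 s x) * Gl1 s x = Gl1 (t + s) x) ∧
    (∀ x : lp (fun _ : ℕ => ℂ) 1, ‖x‖ < 1 →
        Tendsto (fun t => Gl1 t x) (𝓝[>] (0:ℝ)) (𝓝 1)) ∧
    (∀ x : lp (fun _ : ℕ => ℂ) 1, ‖x‖ < 1 → ∀ U ∈ 𝓝 x,
        ¬ TendstoUniformlyOn (fun t y => Gl1 t y) (fun _ => (1:ℂ)) (𝓝[>] (0:ℝ))
          (U ∩ {y : lp (fun _ : ℕ => ℂ) 1 | ‖y‖ < 1})) :=
  ⟨fun t ht s hs x _ => Gl1_Fl1_mul_Gl1 ht hs x,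
    fun x _ => (tendsto_Gl1_nhds_one x).mono_left nhdsWithin_le_nhds,
    fun x hx U hU => not_tendstoUniformlyOn_Gl1 x <|
      inter_mem hU ((isOpen_lt continuous_norm continuous_const).mem_nhds hx)⟩

end
end

section
/- Define on the interval D = (−1,1) the semigroup F_t(x) = e^{-t} x and Γ_t(x) = e^{-t} for |x| < 1/2; Γ_t(x) = 2|x| e^{-t} for 1/2 ≤ |x| < min{1, e^t/2}; Γ_t(x) = 1 otherwise. Then {Γ_t}_{t≥0} is a real-valued semicocycle over F, but for every x with |x| > 1/2 the function t ↦ Γ_t(x) is not differentiable at t = ln(2|x|). -/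
/-! For `|x| < 1`, `Γ_t(x) = e^{-t} k(x) / k(e^{-t} x)` with `k(x) = max 1 (2|x|)`: `Γ` is a
coboundary twist of the cocycle `e^{-t}`, which gives the semicocycle identity and the limit at
`t = 0` for free. For `1/2 < |x| < 1` this reads `Γ_t(x) = min 1 (2|x| e^{-t})`, whose one-sided
derivatives at `t = ln(2|x|)` are `0` and `-1`. -/

open Filter Metric Set Topology

noncomputable section

/-- The piecewise-defined semicocycle from the example: `Γ_t(x) = e^{-t}` for
`|x| < 1/2`; `Γ_t(x) = 2|x|e^{-t}` for `1/2 ≤ |x| < min{1, e^t/2}`; `Γ_t(x) = 1`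
otherwise. -/
def G19 (t x : ℝ) : ℝ :=
  if |x| < 1 / 2 then Real.exp (-t)
  else if |x| < min 1 (Real.exp t / 2) then 2 * |x| * Real.exp (-t)
  else 1

theorem not_differentiableAt_of_hasDerivWithinAt_Iic_Ici {E : Type*} [NormedAddCommGroup E]
    [NormedSpace ℝ E] {f : ℝ → E} {a : ℝ} {f₁ f₂ : E} (h₁ : HasDerivWithinAt f f₁ (Iic a) a)
    (h₂ : HasDerivWithinAt f f₂ (Ici a) a) (hne : f₁ ≠ f₂) : ¬DifferentiableAt ℝ f a := by
  intro hf
  have hleft := (uniqueDiffOn_Iic a a self_mem_Iic).eq_deriv _ h₁ hf.hasDerivAt.hasDerivWithinAt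
  have hright := (uniqueDiffOn_Ici a a self_mem_Ici).eq_deriv _ h₂ hf.hasDerivAt.hasDerivWithinAt
  exact hne (hleft.trans hright.symm)

theorem not_differentiableAt_min_one_mul_exp_neg {c : ℝ} (hc : 1 < c) :
    ¬DifferentiableAt ℝ (fun t => min 1 (c * Real.exp (-t))) (Real.log c) := by
  have hc0 : 0 < c := one_pos.trans hc
  have hexp : ∀ t, c * Real.exp (-t) = Real.exp (Real.log c - t) := fun t => by
    rw [sub_eq_add_neg, Real.exp_add, Real.exp_log hc0]
  have hleft : HasDerivWithinAt (fun t => min 1 (c * Real.exp (-t))) 0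
      (Iic (Real.log c)) (Real.log c) := by
    refine (hasDerivWithinAt_const _ _ 1).congr_of_mem (fun t ht => min_eq_left ?_) self_mem_Iic
    rw [hexp]
    exact Real.one_le_exp (sub_nonneg.mpr ht)
  have hright : HasDerivWithinAt (fun t => min 1 (c * Real.exp (-t))) (-(c * Real.exp (-Real.log c)))
      (Ici (Real.log c)) (Real.log c) := by
    have hderiv := ((Real.hasDerivAt_exp _).comp _ (hasDerivAt_neg (Real.log c))).const_mul c
    refine (hderiv.hasDerivWithinAt.congr_deriv (by ring)).congr_of_mem
      (fun t ht => min_eq_right ?_) self_mem_Ici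
    rw [hexp]
    exact Real.exp_le_one_iff.mpr (sub_nonpos.mpr ht)
  exact not_differentiableAt_of_hasDerivWithinAt_Iic_Ici hleft hright
    (by simp [hc0.ne', Real.exp_ne_zero])

section ScaledCoboundary

variable {X : Type*}

def scaledCoboundary (F : ℝ → X → X) (k : X → ℝ) (t : ℝ) (x : X) : ℝ :=
  Real.exp (-t) * k x / k (F t x)

theorem scaledCoboundary_mul {F : ℝ → X → X} (hF : ∀ t s x, F t (F s x) = F (t + s) x)
    {k : X → ℝ} (hk : ∀ x, k x ≠ 0) (t s : ℝ) (x : X) :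
    scaledCoboundary F k t (F s x) * scaledCoboundary F k s x = scaledCoboundary F k (t + s) x := by
  have hks := hk (F s x)
  have hkts := hk (F (t + s) x)
  simp only [scaledCoboundary, hF, neg_add, Real.exp_add]
  field_simp

theorem tendsto_scaledCoboundary_nhds_zero {F : ℝ → X → X} {k : X → ℝ} {x : X} (hF : F 0 x = x)
    (hkF : ContinuousAt (fun t => k (F t x)) 0) (hk : k x ≠ 0) :
    Tendsto (fun t => scaledCoboundary F k t x) (𝓝 0) (𝓝 1) := by
  have hcont : ContinuousAt (fun t => scaledCoboundary F k t x) 0 :=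
    ((Real.continuous_exp.comp continuous_neg).continuousAt.mul continuousAt_const).div hkF
      (by simpa [hF] using hk)
  simpa [scaledCoboundary, hF, hk] using hcont.tendsto

end ScaledCoboundary

theorem G19_eq_min {t x : ℝ} (hx₁ : 1 / 2 ≤ |x|) (hx₂ : |x| < 1) :
    G19 t x = min 1 (2 * |x| * Real.exp (-t)) := by
  have hlt : |x| < Real.exp t / 2 ↔ 2 * |x| * Real.exp (-t) < 1 := by
    rw [Real.exp_neg, ← div_eq_mul_inv, div_lt_one (Real.exp_pos t)]
    constructor <;> intro h <;> linarith
  simp only [G19, if_neg hx₁.not_gt, lt_min_iff, hx₂, true_and, hlt]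
  split_ifs with h
  · exact (min_eq_right h.le).symm
  · exact (min_eq_left (not_lt.mp h)).symm

theorem G19_eq_scaledCoboundary {t x : ℝ} (ht : 0 ≤ t) (hx : |x| < 1) :
    G19 t x = scaledCoboundary (fun t x => Real.exp (-t) * x) (fun x => max 1 (2 * |x|)) t x := by
  have hexp : Real.exp (-t) ≤ 1 := Real.exp_le_one_iff.mpr (neg_nonpos.mpr ht)
  have habs : 2 * |Real.exp (-t) * x| = 2 * |x| * Real.exp (-t) := by
    rw [abs_mul, abs_of_pos (Real.exp_pos _)]; ring
  simp only [scaledCoboundary, habs]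
  rcases lt_or_ge |x| (1 / 2) with hsmall | hlarge
  · have h₁ : 2 * |x| ≤ 1 := by linarith
    have h₂ : 2 * |x| * Real.exp (-t) ≤ 1 := by nlinarith [abs_nonneg x, Real.exp_pos (-t)]
    rw [G19, if_pos hsmall, max_eq_left h₁, max_eq_left h₂, mul_one, div_one]
  · rw [G19_eq_min hlarge hx, max_eq_right (by linarith)]
    rcases le_total (2 * |x| * Real.exp (-t)) 1 with hle | hge
    · rw [min_eq_right hle, max_eq_left hle]; ring
    · have hpos : 0 < 2 * |x| * Real.exp (-t) := by positivity
      rw [min_eq_left hge, max_eq_right hge, mul_comm, div_self hpos.ne']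

/-- On `D = (-1,1)` with the semigroup `F_t(x) = e^{-t}x`, the family `G19` is a
real-valued semicocycle over `F`, but for every `x` with `|x| > 1/2` the function
`t ↦ Γ_t(x)` is not differentiable at `t = ln(2|x|)`. -/
theorem piecewise_semicocycle_not_differentiable :
    (∀ t ≥ (0:ℝ), ∀ s ≥ (0:ℝ), ∀ x ∈ Set.Ioo (-1:ℝ) 1,
        G19 t (Real.exp (-s) * x) * G19 s x = G19 (t + s) x) ∧
    (∀ x ∈ Set.Ioo (-1:ℝ) 1, Tendsto (fun t => G19 t x) (𝓝[>] (0:ℝ)) (𝓝 1)) ∧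
    (∀ x : ℝ, 1 / 2 < |x| → |x| < 1 →
        ¬ DifferentiableAt ℝ (fun t => G19 t x) (Real.log (2 * |x|))) := by
  have hflow : ∀ t s x : ℝ, Real.exp (-t) * (Real.exp (-s) * x) = Real.exp (-(t + s)) * x :=
    fun t s x => by rw [neg_add, Real.exp_add, mul_assoc]
  have hk : ∀ x : ℝ, max 1 (2 * |x|) ≠ 0 := fun x => (one_pos.trans_le (le_max_left _ _)).ne'
  refine ⟨fun t ht s hs x hx => ?_, fun x hx => ?_, fun x hx₁ hx₂ => ?_⟩
  · have hx : |x| < 1 := abs_lt.mpr hx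
    have hsx : |Real.exp (-s) * x| < 1 := by
      rw [abs_mul, abs_of_pos (Real.exp_pos _)]
      nlinarith [Real.exp_le_one_iff.mpr (neg_nonpos.mpr hs), abs_nonneg x]
    rw [G19_eq_scaledCoboundary ht hsx, G19_eq_scaledCoboundary hs hx,
      G19_eq_scaledCoboundary (add_nonneg ht hs) hx]
    exact scaledCoboundary_mul hflow hk t s x
  · have hlim := tendsto_scaledCoboundary_nhds_zero (F := fun t x => Real.exp (-t) * x)
      (k := fun x => max 1 (2 * |x|)) (by simp) (by fun_prop) (hk x)
    refine (hlim.mono_left nhdsWithin_le_nhds).congr' ?_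
    filter_upwards [self_mem_nhdsWithin] with t ht
    exact (G19_eq_scaledCoboundary (le_of_lt ht) (abs_lt.mpr hx)).symm
  · have hmin : (fun t => G19 t x) = fun t => min 1 (2 * |x| * Real.exp (-t)) :=
      funext fun t => G19_eq_min hx₁.le hx₂
    rw [hmin]
    exact not_differentiableAt_min_one_mul_exp_neg (by linarith)

end
end
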